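/- arXiv:math/0608263 — 6 statements merged into one kernel-verified Lean document; each statement's English description precedes it below -/
import Mathlib

section
/- For q ∈ (G, 2), where G = (1+√5)/2: q belongs to B_2 (i.e., there exists x ∈ [0,1/(q-1)] having exactly two expansions in base q) if and only if 1 ∈ U_q − U_q, i.e., there exist y, z ∈ U_q with z − y = 1. -/
noncomputable section

/-- `a` is an expansion of `x` in base `q`: all digits `a n` lie in `{0,1}` and
`x = Σ_{n≥1} a_n q^{-n}` (here `a n` is the `(n+1)`-st digit, i.e. indexing is 0-based). -/
def IsExpansion (q x : ℝ) (a : ℕ → ℕ) : Prop :=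
  (∀ n, a n ≤ 1) ∧ x = ∑' n : ℕ, (a n : ℝ) / q ^ (n + 1)

/-- The set of expansions of `x` in base `q`. -/
def expansionsOf (q x : ℝ) : Set (ℕ → ℕ) := {a | IsExpansion q x a}

/-- `U_q`: the set of `x ∈ [0, 1/(q-1)]` having a unique expansion in base `q`. -/
def uniqueExpansionSet (q : ℝ) : Set ℝ :=
  {x | x ∈ Set.Icc 0 (1 / (q - 1)) ∧ ∃! a, IsExpansion q x a}

/-- `B_m` (for finite `m`): bases `q ∈ (G, 2)` for which some `x ∈ I_q` has exactly `m`
expansions in base `q`. -/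
def B (m : ℕ) : Set ℝ :=
  {q | q ∈ Set.Ioo ((1 + Real.sqrt 5) / 2) 2 ∧
    ∃ x ∈ Set.Icc (0:ℝ) (1 / (q - 1)), Cardinal.mk (expansionsOf q x) = m}

/-- `B_{ℵ₀}`: bases `q ∈ (G, 2)` for which some `x ∈ I_q` has exactly countably infinitely
many expansions in base `q`. -/
def Baleph0 : Set ℝ :=
  {q | q ∈ Set.Ioo ((1 + Real.sqrt 5) / 2) 2 ∧
    ∃ x ∈ Set.Icc (0:ℝ) (1 / (q - 1)), Cardinal.mk (expansionsOf q x) = Cardinal.aleph0}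

/-- The Thue–Morse sequence: `thueMorse n` is the parity of the number of 1s in the
binary expansion of `n`. -/
def thueMorse (n : ℕ) : ℕ := ((Nat.digits 2 n).count 1) % 2

/-- A digit `a m` of an expansion of `x` in base `q` is forced if every expansion of `x`
agreeing with `a` before position `m` also agrees at position `m`. -/
def Forced (q x : ℝ) (a : ℕ → ℕ) (m : ℕ) : Prop :=
  ∀ c : ℕ → ℕ, IsExpansion q x c → (∀ i < m, c i = a i) → c m = a m

/-! If `x` has exactly two expansions, strip their common prefix: after the first digit where
they differ, one continues as an expansion of some `y` and the other as an expansion of `y + 1`.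
Each of these is unique, since another expansion could be spliced back in front to give a third
expansion of `x`. Conversely, if `y` and `y + 1` have unique expansions `α` and `β`, then the
expansions of `(y + 1) / q` are exactly `1α` and `0β`. -/

theorem Cardinal.mk_set_eq_two_iff {α : Type*} {s : Set α} :
    Cardinal.mk s = 2 ↔ ∃ a b, a ≠ b ∧ s = {a, b} := by
  rw [← Set.encard_eq_two, Set.encard, ENat.card, Cardinal.toENat_eq_ofNat]

def digitCons (d : ℕ) (c : ℕ → ℕ) : ℕ → ℕ
  | 0 => d
  | n + 1 => c n

@[simp] theorem digitCons_zero (d : ℕ) (c : ℕ → ℕ) : digitCons d c 0 = d := rfl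

@[simp] theorem digitCons_succ (d : ℕ) (c : ℕ → ℕ) (n : ℕ) : digitCons d c (n + 1) = c n := rfl

theorem digitCons_head_tail (a : ℕ → ℕ) : digitCons (a 0) (fun n => a (n + 1)) = a := by
  funext n; cases n <;> rfl

theorem digitCons_eq_iff {d : ℕ} {c a : ℕ → ℕ} :
    digitCons d c = a ↔ d = a 0 ∧ c = fun n => a (n + 1) := by
  constructor
  · rintro rfl; exact ⟨rfl, rfl⟩
  · rintro ⟨rfl, rfl⟩; exact digitCons_head_tail a

section Expansion

variable {q x : ℝ} {a b : ℕ → ℕ}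

theorem tsum_one_div_pow_succ (hq : 1 < q) : ∑' n : ℕ, 1 / q ^ (n + 1) = 1 / (q - 1) := by
  have hq0 : 0 < q := one_pos.trans hq
  simp_rw [pow_succ, ← div_div, tsum_div_const, one_div, ← inv_pow,
    tsum_geometric_of_lt_one (by positivity) (inv_lt_one_of_one_lt₀ hq)]
  field_simp

theorem summable_digits_div_pow (hq : 1 < q) (ha : ∀ n, a n ≤ 1) :
    Summable fun n => (a n : ℝ) / q ^ (n + 1) := by
  have hq0 : 0 < q := one_pos.trans hq
  have hgeom : Summable fun n : ℕ => (1 / q) ^ (n + 1) :=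
    (summable_nat_add_iff 1).mpr <| summable_geometric_of_lt_one (by positivity) <|
      (div_lt_one hq0).mpr hq
  refine hgeom.of_nonneg_of_le (fun n => by positivity) fun n => ?_
  rw [div_pow, one_pow]
  gcongr
  exact_mod_cast ha n

theorem IsExpansion.mem_Icc (hq : 1 < q) (ha : IsExpansion q x a) :
    x ∈ Set.Icc 0 (1 / (q - 1)) := by
  have hq0 : 0 < q := one_pos.trans hq
  rw [ha.2]
  refine ⟨tsum_nonneg fun n => by positivity, ?_⟩
  calc ∑' n, (a n : ℝ) / q ^ (n + 1) ≤ ∑' n : ℕ, ((1 : ℕ) : ℝ) / q ^ (n + 1) :=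
        (summable_digits_div_pow hq ha.1).tsum_le_tsum
          (fun n => by gcongr; exact_mod_cast ha.1 n)
          (summable_digits_div_pow hq fun _ => le_rfl)
    _ = 1 / (q - 1) := by simpa using tsum_one_div_pow_succ hq

theorem isExpansion_digitCons_iff (hq : 1 < q) {d : ℕ} {c : ℕ → ℕ} :
    IsExpansion q x (digitCons d c) ↔ d ≤ 1 ∧ IsExpansion q (q * x - d) c := by
  have hq0 : q ≠ 0 := (one_pos.trans hq).ne'
  have hdigits : (∀ n, digitCons d c n ≤ 1) ↔ d ≤ 1 ∧ ∀ n, c n ≤ 1 :=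
    ⟨fun h => ⟨h 0, fun n => h (n + 1)⟩, fun h n => n.casesOn h.1 h.2⟩
  have hshift :
      ∑' n : ℕ, (c n : ℝ) / q ^ (n + 1 + 1)
        = (∑' n : ℕ, (c n : ℝ) / q ^ (n + 1)) / q := by
    rw [← tsum_div_const]
    simp_rw [pow_succ _ (_ + 1), div_div]
  simp only [IsExpansion, hdigits, and_assoc]
  refine and_congr_right fun hd => and_congr_right fun hc => ?_
  rw [(summable_digits_div_pow hq (hdigits.mpr ⟨hd, hc⟩)).tsum_eq_zero_add]
  simp only [digitCons_zero, digitCons_succ, hshift, zero_add, pow_one]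
  constructor <;> intro h <;> field_simp at h ⊢ <;> linarith

theorem isExpansion_iff_tail (hq : 1 < q) :
    IsExpansion q x a ↔ a 0 ≤ 1 ∧ IsExpansion q (q * x - a 0) fun n => a (n + 1) := by
  conv_lhs => rw [← digitCons_head_tail a]
  exact isExpansion_digitCons_iff hq

theorem mem_uniqueExpansionSet_iff (hq : 1 < q) :
    x ∈ uniqueExpansionSet q ↔ ∃! a, IsExpansion q x a :=
  ⟨And.right, fun h => ⟨h.exists.elim fun _ ha => ha.mem_Icc hq, h⟩⟩

theorem expansionsOf_eq_union (hq : 1 < q) :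
    expansionsOf q x =
      digitCons 0 '' expansionsOf q (q * x) ∪ digitCons 1 '' expansionsOf q (q * x - 1) := by
  ext a
  simp only [expansionsOf, Set.mem_union, Set.mem_image, Set.mem_ofPred_eq]
  refine ⟨fun ha => ?_, ?_⟩
  · obtain ⟨ha0, htail⟩ := (isExpansion_iff_tail hq).mp ha
    rcases Nat.le_one_iff_eq_zero_or_eq_one.mp ha0 with h | h
    · exact .inl ⟨_, by simpa [h] using htail, digitCons_eq_iff.mpr ⟨h.symm, rfl⟩⟩
    · exact .inr ⟨_, by simpa [h] using htail, digitCons_eq_iff.mpr ⟨h.symm, rfl⟩⟩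
  · rintro (⟨c, hc, rfl⟩ | ⟨c, hc, rfl⟩) <;>
      exact (isExpansion_digitCons_iff hq).mpr ⟨by norm_num, by simpa using hc⟩

theorem existsUnique_tail_of_expansionsOf_eq_pair (hq : 1 < q) (hx : expansionsOf q x = {a, b})
    (h0 : a 0 ≠ b 0) : ∃! c, IsExpansion q (q * x - a 0) c := by
  have ha : a ∈ expansionsOf q x := hx ▸ Set.mem_insert a {b}
  obtain ⟨ha0, htail⟩ := (isExpansion_iff_tail hq).mp ha
  refine ⟨_, htail, fun c hc => ?_⟩
  have hcons : digitCons (a 0) c ∈ expansionsOf q x :=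
    (isExpansion_digitCons_iff hq).mpr ⟨ha0, hc⟩
  rcases hx ▸ hcons with h | h
  · exact (digitCons_eq_iff.mp h).2
  · exact absurd (digitCons_eq_iff.mp h).1 h0

theorem expansionsOf_mul_sub_head_eq_pair (hq : 1 < q) (hx : expansionsOf q x = {a, b})
    (h0 : a 0 = b 0) :
    expansionsOf q (q * x - a 0) = {fun n => a (n + 1), fun n => b (n + 1)} := by
  have ha0 : a 0 ≤ 1 := (hx ▸ Set.mem_insert a {b} : a ∈ expansionsOf q x).1 0
  ext c
  change IsExpansion q _ c ↔ _
  rw [← (isExpansion_digitCons_iff hq).trans (and_iff_right ha0)]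
  change digitCons (a 0) c ∈ expansionsOf q x ↔ _
  rw [hx]
  simp only [Set.mem_insert_iff, Set.mem_singleton_iff, digitCons_eq_iff, h0, true_and]

theorem exists_sub_eq_one_of_expansionsOf_eq_pair_of_head_ne (hq : 1 < q)
    (hx : expansionsOf q x = {a, b}) (h0 : a 0 ≠ b 0) :
    ∃ y ∈ uniqueExpansionSet q, ∃ z ∈ uniqueExpansionSet q, z - y = 1 := by
  wlog hab : a 0 = 1 ∧ b 0 = 0 generalizing a b
  · have ha0 := (hx ▸ Set.mem_insert a {b} : a ∈ expansionsOf q x).1 0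
    have hb0 := (hx ▸ Set.mem_insert_of_mem a rfl : b ∈ expansionsOf q x).1 0
    exact this (Set.pair_comm a b ▸ hx) h0.symm (by omega)
  refine ⟨q * x - a 0, (mem_uniqueExpansionSet_iff hq).mpr
    (existsUnique_tail_of_expansionsOf_eq_pair hq hx h0), q * x - b 0,
    (mem_uniqueExpansionSet_iff hq).mpr
      (existsUnique_tail_of_expansionsOf_eq_pair hq (Set.pair_comm a b ▸ hx) h0.symm), ?_⟩
  rw [hab.1, hab.2]
  push_cast
  ring

theorem exists_sub_eq_one_of_expansionsOf_eq_pair (hq : 1 < q)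
    (hx : expansionsOf q x = {a, b}) (hab : a ≠ b) :
    ∃ y ∈ uniqueExpansionSet q, ∃ z ∈ uniqueExpansionSet q, z - y = 1 := by
  obtain ⟨m, hm⟩ := Function.ne_iff.mp hab
  clear hab
  induction m generalizing x a b with
  | zero => exact exists_sub_eq_one_of_expansionsOf_eq_pair_of_head_ne hq hx hm
  | succ m ih =>
    by_cases h0 : a 0 = b 0
    · exact ih (expansionsOf_mul_sub_head_eq_pair hq hx h0) hm
    · exact exists_sub_eq_one_of_expansionsOf_eq_pair_of_head_ne hq hx h0

theorem expansionsOf_div_eq_pair (hq : 1 < q) {y : ℝ} {α β : ℕ → ℕ}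
    (hα : expansionsOf q y = {α}) (hβ : expansionsOf q (y + 1) = {β}) :
    expansionsOf q ((y + 1) / q) = {digitCons 0 β, digitCons 1 α} := by
  rw [expansionsOf_eq_union hq, mul_div_cancel₀ _ (one_pos.trans hq).ne', add_sub_cancel_right,
    hα, hβ, Set.image_singleton, Set.image_singleton, Set.singleton_union]

end Expansion

theorem stmt1 (q : ℝ) (hq : q ∈ Set.Ioo ((1 + Real.sqrt 5) / 2) 2) :
    q ∈ B 2 ↔ ∃ y ∈ uniqueExpansionSet q, ∃ z ∈ uniqueExpansionSet q, z - y = 1 := by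
  have hq1 : 1 < q := Real.one_lt_goldenRatio.trans hq.1
  constructor
  · rintro ⟨-, x, -, hx⟩
    obtain ⟨a, b, hab, hx⟩ := Cardinal.mk_set_eq_two_iff.mp (by exact_mod_cast hx)
    exact exists_sub_eq_one_of_expansionsOf_eq_pair hq1 hx hab
  · rintro ⟨y, hy, z, hz, hzy⟩
    obtain rfl : z = y + 1 := by linarith
    obtain ⟨α, hα, hα'⟩ := (mem_uniqueExpansionSet_iff hq1).mp hy
    obtain ⟨β, hβ, hβ'⟩ := (mem_uniqueExpansionSet_iff hq1).mp hz
    have hx := expansionsOf_div_eq_pair hq1 (Set.eq_singleton_iff_unique_mem.mpr ⟨hα, hα'⟩)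
      (Set.eq_singleton_iff_unique_mem.mpr ⟨hβ, hβ'⟩)
    have hne : digitCons 0 β ≠ digitCons 1 α := fun h => by simpa using congrFun h 0
    refine ⟨hq, (y + 1) / q, IsExpansion.mem_Icc hq1 (hx ▸ Set.mem_insert _ _), ?_⟩
    exact_mod_cast Cardinal.mk_set_eq_two_iff.mpr ⟨_, _, hne, hx⟩
end
end

section
/- For any q ∈ (G, q_2) ∪ (q_2, q_f), each x ∈ [0,1/(q-1)] has either exactly one expansion or infinitely many expansions in base q; i.e., no x has exactly m expansions for any finite m ≥ 2. Here G = (1+√5)/2, q_2 is the root in (1,2) of x⁴ = 2x² + x + 1, and q_f is the root in (1,2) of x³ = 2x² − x + 1. -/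
noncomputable section

namespace S6

def val (q : ℝ) (a : ℕ → ℕ) : ℝ := ∑' n : ℕ, (a n : ℝ) / q ^ (n + 1)

def shf (n : ℕ) (a : ℕ → ℕ) : ℕ → ℕ := fun i => a (i + n)

def cons (d : ℕ) (c : ℕ → ℕ) : ℕ → ℕ := fun i => match i with
  | 0 => d
  | k+1 => c k

@[simp] lemma cons_zero (d : ℕ) (c : ℕ → ℕ) : cons d c 0 = d := rfl
@[simp] lemma cons_succ (d : ℕ) (c : ℕ → ℕ) (k : ℕ) : cons d c (k+1) = c k := rfl

lemma shf_one_cons (d : ℕ) (c : ℕ → ℕ) : shf 1 (cons d c) = c := rfl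

variable {q : ℝ}

lemma isExp_iff {x : ℝ} {a : ℕ → ℕ} :
    IsExpansion q x a ↔ (∀ n, a n ≤ 1) ∧ x = val q a := Iff.rfl

lemma summable_val (hq : 1 < q) {a : ℕ → ℕ} (ha : ∀ n, a n ≤ 1) :
    Summable fun n => (a n : ℝ) / q ^ (n + 1) := by
  have h0 : (0:ℝ) < q := lt_trans one_pos hq
  have hlt : 1/q < 1 := by rw [div_lt_one h0]; exact hq
  have hge : (0:ℝ) ≤ 1/q := by positivity
  apply Summable.of_nonneg_of_le (fun n => by positivity) (fun n => ?_)
    ((summable_geometric_of_lt_one hge hlt).mul_left (1/q))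
  have h1 : (a n : ℝ) ≤ 1 := by exact_mod_cast ha n
  have h2 : (0:ℝ) < q ^ (n+1) := by positivity
  have : (a n : ℝ) / q ^ (n+1) ≤ 1 / q^(n+1) := by gcongr
  refine this.trans (le_of_eq ?_)
  rw [div_pow, one_pow, pow_succ]
  field_simp

lemma val_nonneg (hq : 1 < q) {a : ℕ → ℕ} (ha : ∀ n, a n ≤ 1) : 0 ≤ val q a := by
  have h0 : (0:ℝ) < q := lt_trans one_pos hq
  exact tsum_nonneg fun n => by positivity

lemma val_le (hq : 1 < q) {a : ℕ → ℕ} (ha : ∀ n, a n ≤ 1) : val q a ≤ 1/(q-1) := by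
  have h0 : (0:ℝ) < q := lt_trans one_pos hq
  have hlt : 1/q < 1 := by rw [div_lt_one h0]; exact hq
  have hge : (0:ℝ) ≤ 1/q := by positivity
  have hsum : Summable fun n : ℕ => (1/q) * (1/q)^n :=
    (summable_geometric_of_lt_one hge hlt).mul_left (1/q)
  have hle : val q a ≤ ∑' n : ℕ, (1/q) * (1/q)^n := by
    apply Summable.tsum_le_tsum _ (summable_val hq ha) hsum
    intro n
    have h1 : (a n : ℝ) ≤ 1 := by exact_mod_cast ha n
    have h2 : (0:ℝ) < q ^ (n+1) := by positivity
    have h3 : (1:ℝ)/q * (1/q)^n = 1 / q^(n+1) := by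
      rw [div_pow, one_pow, pow_succ]; field_simp
    rw [h3]; gcongr
  refine hle.trans (le_of_eq ?_)
  rw [tsum_mul_left, tsum_geometric_of_lt_one hge hlt]
  have hq1 : q - 1 ≠ 0 := by intro h; nlinarith
  field_simp

lemma val_shift (hq : 1 < q) {a : ℕ → ℕ} (ha : ∀ n, a n ≤ 1) :
    val q a = (a 0 : ℝ)/q + val q (shf 1 a) / q := by
  have h0 : (0:ℝ) < q := lt_trans one_pos hq
  have hs := summable_val hq ha
  rw [val, Summable.tsum_eq_zero_add hs]
  congr 1
  · norm_num
  have h1 : ∀ n : ℕ, (a (n+1) : ℝ) / q^(n+1+1) = ((shf 1 a n : ℝ)/q^(n+1)) * (1/q) := by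
    intro n
    have h2 : (0:ℝ) < q ^ (n+1) := by positivity
    simp only [shf]
    rw [pow_succ]
    field_simp
  rw [tsum_congr h1, tsum_mul_right]
  rw [val]
  field_simp

lemma exp_val (hq : 1 < q) {a : ℕ → ℕ} (ha : ∀ n, a n ≤ 1) : IsExpansion q (val q a) a :=
  ⟨ha, rfl⟩

lemma exp_shift (hq : 1 < q) {x : ℝ} {a : ℕ → ℕ} (h : IsExpansion q x a) :
    IsExpansion q (q * x - a 0) (shf 1 a) := by
  obtain ⟨ha, hx⟩ := h
  have hx' : x = val q a := hx
  refine ⟨fun n => ha _, ?_⟩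
  show q * x - (a 0 : ℝ) = val q (shf 1 a)
  have hvs := val_shift hq ha
  have h0 : (0:ℝ) < q := lt_trans one_pos hq
  rw [hx', hvs]
  field_simp
  ring

lemma exp_cons (hq : 1 < q) {z : ℝ} {c : ℕ → ℕ} (h : IsExpansion q z c) {d : ℕ} (hd : d ≤ 1) :
    IsExpansion q ((d + z)/q) (cons d c) := by
  obtain ⟨hc, hz⟩ := h
  have hb : ∀ n, cons d c n ≤ 1 := by intro n; cases n with
    | zero => simpa using hd
    | succ k => simpa using hc k
  refine ⟨hb, ?_⟩
  have hz' : z = val q c := hz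
  show ((d:ℕ) + z)/q = val q (cons d c)
  have hvs := val_shift hq hb
  rw [shf_one_cons] at hvs
  rw [show ((cons d c 0 : ℕ) : ℝ) = (d:ℝ) from rfl] at hvs
  rw [hvs, hz']
  ring

end S6

namespace S6

variable {q : ℝ}

def gOrb (q x : ℝ) : ℕ → ℝ
  | 0 => x
  | n+1 => if 1 ≤ q * gOrb q x n then q * gOrb q x n - 1 else q * gOrb q x n

def gDig (q x : ℝ) (n : ℕ) : ℕ := if 1 ≤ q * gOrb q x n then 1 else 0

lemma gOrb_succ (x : ℝ) (n : ℕ) :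
    gOrb q x (n+1) = q * gOrb q x n - (gDig q x n : ℝ) := by
  rw [gOrb, gDig]
  split <;> simp

lemma gOrb_mem (hq : 1 < q) (hq2 : q < 2) {x : ℝ} (hx0 : 0 ≤ x) (hx1 : x ≤ 1/(q-1)) :
    ∀ n, 0 ≤ gOrb q x n ∧ gOrb q x n ≤ 1/(q-1) := by
  have h0 : (0:ℝ) < q := lt_trans one_pos hq
  have hm : (0:ℝ) < q - 1 := by linarith
  intro n
  induction n with
  | zero => exact ⟨hx0, hx1⟩
  | succ n ih =>
    obtain ⟨h1, h2⟩ := ih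
    rw [gOrb]
    split
    · constructor
      · linarith
      · have : q * gOrb q x n ≤ q * (1/(q-1)) := by nlinarith
        have h3 : q * (1/(q-1)) - 1 = 1/(q-1) := by field_simp; ring
        linarith
    · rename_i h
      push_neg at h
      constructor
      · positivity
      · have : (1:ℝ) ≤ 1/(q-1) := by rw [le_div_iff₀ hm]; linarith
        linarith

lemma gOrb_partial (hq : 1 < q) (x : ℝ) :
    ∀ n, x = (∑ i ∈ Finset.range n, (gDig q x i : ℝ) / q^(i+1)) + gOrb q x n / q^n := by
  have h0 : (0:ℝ) < q := lt_trans one_pos hq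
  intro n
  induction n with
  | zero => simp [gOrb]
  | succ n ih =>
    rw [Finset.sum_range_succ]
    have hs := gOrb_succ (q := q) x n
    have hpow : (0:ℝ) < q^n := by positivity
    have : gOrb q x n / q^n = (gDig q x n : ℝ)/q^(n+1) + gOrb q x (n+1) / q^(n+1) := by
      rw [hs, pow_succ]
      field_simp
      ring
    linarith [this]

lemma exists_exp (hq : 1 < q) (hq2 : q < 2) {x : ℝ} (hx0 : 0 ≤ x) (hx1 : x ≤ 1/(q-1)) :
    ∃ a, IsExpansion q x a := by
  have h0 : (0:ℝ) < q := lt_trans one_pos hq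
  have hm : (0:ℝ) < q - 1 := by linarith
  refine ⟨gDig q x, fun n => by rw [gDig]; split <;> simp, ?_⟩
  have hd : ∀ n, gDig q x n ≤ 1 := fun n => by rw [gDig]; split <;> simp
  have hs := summable_val hq hd
  have ht1 : Filter.Tendsto (fun n => ∑ i ∈ Finset.range n, (gDig q x i : ℝ)/q^(i+1))
      Filter.atTop (nhds (val q (gDig q x))) := hs.hasSum.tendsto_sum_nat
  have ht2 : Filter.Tendsto (fun n => ∑ i ∈ Finset.range n, (gDig q x i : ℝ)/q^(i+1))
      Filter.atTop (nhds x) := by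
    have heq : ∀ n, ∑ i ∈ Finset.range n, (gDig q x i : ℝ)/q^(i+1) = x - gOrb q x n / q^n := by
      intro n; have := gOrb_partial hq x n; linarith
    have ht3 : Filter.Tendsto (fun n : ℕ => gOrb q x n / q^n) Filter.atTop (nhds 0) := by
      refine squeeze_zero (g := fun n : ℕ => (1/(q-1)) * (1/q)^n) (fun n => ?_) (fun n => ?_) ?_
      · have h1 := (gOrb_mem hq hq2 hx0 hx1 n).1
        positivity
      · have h1 := (gOrb_mem hq hq2 hx0 hx1 n).2
        have hp : (0:ℝ) < q^n := by positivity
        have he : (1/(q-1)) * (1/q)^n = (1/(q-1))/q^n := by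
          rw [div_pow, one_pow]; ring
        show gOrb q x n / q ^ n ≤ 1 / (q - 1) * (1 / q) ^ n
        rw [he]
        gcongr
      · have hlt : 1/q < 1 := by rw [div_lt_one h0]; exact hq
        have hge : (0:ℝ) ≤ 1/q := by positivity
        have h2 := (tendsto_pow_atTop_nhds_zero_of_lt_one hge hlt).const_mul (1/(q-1))
        simpa using h2
    have := Filter.Tendsto.sub (tendsto_const_nhds (x := x)) ht3
    simp only [sub_zero] at this
    simpa only [← heq] using this
  exact tendsto_nhds_unique ht2 ht1

lemma exp_partial (hq : 1 < q) {x : ℝ} {a : ℕ → ℕ} (h : IsExpansion q x a) :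
    ∀ n, x = (∑ i ∈ Finset.range n, (a i : ℝ) / q^(i+1)) + val q (shf n a) / q^n ∧
      IsExpansion q (val q (shf n a)) (shf n a) := by
  have h0 : (0:ℝ) < q := lt_trans one_pos hq
  obtain ⟨ha, hx⟩ := h
  intro n
  induction n with
  | zero =>
    have : shf 0 a = a := by funext i; simp [shf]
    rw [this]
    refine ⟨by simpa [val] using hx, exp_val hq ha⟩
  | succ n ih =>
    obtain ⟨h1, h2⟩ := ih
    have hd : ∀ i, shf n a i ≤ 1 := fun i => ha _
    have hshift := val_shift hq hd
    have hss : shf 1 (shf n a) = shf (n+1) a := by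
      funext i; simp only [shf]; congr 1; omega
    have hz : (shf n a) 0 = a n := by simp [shf]
    rw [hss, hz] at hshift
    constructor
    · rw [Finset.sum_range_succ, h1, hshift]
      have hpow : (0:ℝ) < q^n := by positivity
      rw [pow_succ]
      field_simp
      ring
    · exact exp_val hq fun i => ha _

end S6

namespace S6

variable {q : ℝ}

/-- shifting preserves unique expansions -/
lemma univ_shift (hq : 1 < q) {z : ℝ} {a : ℕ → ℕ} (hz : IsExpansion q z a)
    (hu : ∀ c, IsExpansion q z c → c = a) :
    IsExpansion q (val q (shf 1 a)) (shf 1 a) ∧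
      (∀ c, IsExpansion q (val q (shf 1 a)) c → c = shf 1 a) := by
  obtain ⟨ha, hzv⟩ := hz
  have hd : ∀ n, shf 1 a n ≤ 1 := fun n => ha _
  refine ⟨exp_val hq hd, fun c hc => ?_⟩
  have hvs := val_shift hq ha
  have hb := exp_cons hq hc (d := a 0) (ha 0)
  have hx : ((a 0 : ℕ) + val q (shf 1 a))/q = z := by
    rw [hzv]; show _ = val q a; rw [hvs]; ring
  rw [hx] at hb
  have := hu _ hb
  funext i
  have : cons (a 0) c (i+1) = a (i+1) := by rw [this]
  simpa [shf] using this

lemma univ_shift_n (hq : 1 < q) {z : ℝ} {a : ℕ → ℕ} (hz : IsExpansion q z a)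
    (hu : ∀ c, IsExpansion q z c → c = a) (n : ℕ) :
    IsExpansion q (val q (shf n a)) (shf n a) ∧
      (∀ c, IsExpansion q (val q (shf n a)) c → c = shf n a) := by
  induction n with
  | zero =>
    have he : shf 0 a = a := by funext i; simp [shf]
    rw [he]
    obtain ⟨ha, hzv⟩ := hz
    have hzv' : z = val q a := hzv
    refine ⟨exp_val hq ha, fun c hc => hu c ?_⟩
    rwa [← hzv'] at hc
  | succ n ih =>
    obtain ⟨h1, h2⟩ := ih
    have := univ_shift hq h1 h2
    have he : shf 1 (shf n a) = shf (n+1) a := by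
      funext i; simp only [shf]; congr 1; omega
    rwa [he] at this

lemma forced0 (hq : 1 < q) (hq2 : q < 2) {z : ℝ} {a : ℕ → ℕ} (hz : IsExpansion q z a)
    (hu : ∀ c, IsExpansion q z c → c = a) (h0 : a 0 = 0) :
    val q (shf 1 a) < 1 := by
  by_contra hcon
  push_neg at hcon
  obtain ⟨ha, hzv⟩ := hz
  set w := val q (shf 1 a) with hw
  have hd : ∀ n, shf 1 a n ≤ 1 := fun n => ha _
  have hwle : w ≤ 1/(q-1) := val_le hq hd
  have hm : (0:ℝ) < q - 1 := by linarith
  obtain ⟨c, hc⟩ := exists_exp hq hq2 (x := w - 1) (by linarith) (by linarith)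
  have hb := exp_cons hq hc (d := 1) le_rfl
  have hx : ((1:ℕ) + (w - 1))/q = z := by
    have hvs := val_shift hq ha
    rw [hzv]; show _ = val q a; rw [hvs, h0]; push_cast; ring
  rw [hx] at hb
  have := hu _ hb
  have h1 : cons 1 c 0 = a 0 := by rw [this]
  simp [h0] at h1

lemma forced1 (hq : 1 < q) (hq2 : q < 2) {z : ℝ} {a : ℕ → ℕ} (hz : IsExpansion q z a)
    (hu : ∀ c, IsExpansion q z c → c = a) (h0 : a 0 = 1) :
    1/(q-1) - 1 < val q (shf 1 a) := by
  by_contra hcon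
  push_neg at hcon
  obtain ⟨ha, hzv⟩ := hz
  set w := val q (shf 1 a) with hw
  have hd : ∀ n, shf 1 a n ≤ 1 := fun n => ha _
  have hw0 : 0 ≤ w := val_nonneg hq hd
  have hm : (0:ℝ) < q - 1 := by linarith
  obtain ⟨c, hc⟩ := exists_exp hq hq2 (x := w + 1) (by linarith) (by linarith)
  have hb := exp_cons hq hc (d := 0) (by norm_num)
  have hx : ((0:ℕ) + (w + 1))/q = z := by
    have hvs := val_shift hq ha
    rw [hzv]; show _ = val q a; rw [hvs, h0]; push_cast; ring
  rw [hx] at hb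
  have := hu _ hb
  have h1 : cons 0 c 0 = a 0 := by rw [this]
  simp [h0] at h1

lemma no011 (hq : 1 < q) (hq2 : q < 2) (hB : q^3 < 2*q^2 - q + 1) {z : ℝ} {a : ℕ → ℕ}
    (hz : IsExpansion q z a) (hu : ∀ c, IsExpansion q z c → c = a) (n : ℕ) :
    ¬ (a n = 0 ∧ a (n+1) = 1 ∧ a (n+2) = 1) := by
  rintro ⟨e0, e1, e2⟩
  have h0 : (0:ℝ) < q := lt_trans one_pos hq
  have hm : (0:ℝ) < q - 1 := by linarith
  obtain ⟨hzn, hun⟩ := univ_shift_n hq hz hu n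
  obtain ⟨hzn1, hun1⟩ := univ_shift_n hq hz hu (n+1)
  obtain ⟨hzn2, hun2⟩ := univ_shift_n hq hz hu (n+2)
  have d0 : shf n a 0 = 0 := by simpa [shf] using e0
  have d1 : shf (n+1) a 0 = 1 := by simpa [shf] using e1
  have d2 : shf (n+2) a 0 = 1 := by simpa [shf] using e2
  have s1 : shf 1 (shf n a) = shf (n+1) a := by funext i; simp only [shf]; congr 1; omega
  have s2 : shf 1 (shf (n+1) a) = shf (n+2) a := by funext i; simp only [shf]; congr 1; omega
  have s3 : shf 1 (shf (n+2) a) = shf (n+3) a := by funext i; simp only [shf]; congr 1; omega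
  have f0 := forced0 hq hq2 hzn hun d0
  rw [s1] at f0
  have f1 := forced1 hq hq2 hzn1 hun1 d1
  rw [s2] at f1
  have f2 := forced1 hq hq2 hzn2 hun2 d2
  rw [s3] at f2
  set v1 := val q (shf (n+1) a) with hv1
  set v2 := val q (shf (n+2) a) with hv2
  set v3 := val q (shf (n+3) a) with hv3
  have ha : ∀ i, a i ≤ 1 := hz.1
  have e1v : v1 = (1 + v2)/q := by
    have hh := val_shift hq (a := shf (n+1) a) (fun i => ha _)
    rw [s2, d1] at hh
    rw [hv1, hh]; push_cast; ring
  have e2v : v2 = (1 + v3)/q := by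
    have hh := val_shift hq (a := shf (n+2) a) (fun i => ha _)
    rw [s3, d2] at hh
    rw [hv2, hh]; push_cast; ring
  -- f0 : v1 < 1, f1 : M-1 < v2, f2 : M-1 < v3
  have h1 : 1 + v2 < q := by
    rw [e1v, div_lt_one h0] at f0; exact f0
  have h2 : 1 + v3 < (q-1)*q := by
    have : v2 < q - 1 := by linarith
    rw [e2v, div_lt_iff₀ h0] at this
    linarith
  have h3 : 1/(q-1) < (q-1)*q := by linarith
  rw [div_lt_iff₀ hm] at h3
  nlinarith [h3, hB]

lemma no100 (hq : 1 < q) (hq2 : q < 2) (hB : q^3 < 2*q^2 - q + 1) {z : ℝ} {a : ℕ → ℕ}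
    (hz : IsExpansion q z a) (hu : ∀ c, IsExpansion q z c → c = a) (n : ℕ) :
    ¬ (a n = 1 ∧ a (n+1) = 0 ∧ a (n+2) = 0) := by
  rintro ⟨e0, e1, e2⟩
  have h0 : (0:ℝ) < q := lt_trans one_pos hq
  have hm : (0:ℝ) < q - 1 := by linarith
  obtain ⟨hzn, hun⟩ := univ_shift_n hq hz hu n
  obtain ⟨hzn1, hun1⟩ := univ_shift_n hq hz hu (n+1)
  obtain ⟨hzn2, hun2⟩ := univ_shift_n hq hz hu (n+2)
  have d0 : shf n a 0 = 1 := by simpa [shf] using e0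
  have d1 : shf (n+1) a 0 = 0 := by simpa [shf] using e1
  have d2 : shf (n+2) a 0 = 0 := by simpa [shf] using e2
  have s1 : shf 1 (shf n a) = shf (n+1) a := by funext i; simp only [shf]; congr 1; omega
  have s2 : shf 1 (shf (n+1) a) = shf (n+2) a := by funext i; simp only [shf]; congr 1; omega
  have s3 : shf 1 (shf (n+2) a) = shf (n+3) a := by funext i; simp only [shf]; congr 1; omega
  have f0 := forced1 hq hq2 hzn hun d0
  rw [s1] at f0
  have f1 := forced0 hq hq2 hzn1 hun1 d1
  rw [s2] at f1
  have f2 := forced0 hq hq2 hzn2 hun2 d2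
  rw [s3] at f2
  set v1 := val q (shf (n+1) a) with hv1
  set v2 := val q (shf (n+2) a) with hv2
  set v3 := val q (shf (n+3) a) with hv3
  have ha : ∀ i, a i ≤ 1 := hz.1
  have e1v : v1 = v2/q := by
    have hh := val_shift hq (a := shf (n+1) a) (fun i => ha _)
    rw [s2, d1] at hh
    rw [hv1, hh]; push_cast; ring
  have e2v : v2 = v3/q := by
    have hh := val_shift hq (a := shf (n+2) a) (fun i => ha _)
    rw [s3, d2] at hh
    rw [hv2, hh]; push_cast; ring
  -- f0 : M - 1 < v1 = v3/q^2, f2 : v3 < 1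
  have h1 : v1 < 1/(q*q) := by
    rw [e1v, e2v, div_div]
    gcongr
  have h2 : 1/(q-1) - 1 < 1/(q*q) := lt_trans f0 h1
  have h3 : q*q*(1/(q-1) - 1) < 1 := by
    have hx := mul_lt_mul_of_pos_left h2 (by positivity : (0:ℝ) < q*q)
    have hy : q*q*(1/(q*q)) = 1 := by field_simp
    linarith
  have h4 : q*q/(q-1) < 1 + q*q := by
    have : q*q*(1/(q-1)) = q*q/(q-1) := by ring
    linarith
  rw [div_lt_iff₀ hm] at h4
  nlinarith [h4, hB]

end S6

namespace S6

variable {q : ℝ}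

def pat (d j : ℕ) : ℕ → ℕ := fun i => if i < j then d else if (i - j) % 2 = 0 then 1 - d else d

lemma pat_le {d : ℕ} (hd : d ≤ 1) (j i : ℕ) : pat d j i ≤ 1 := by
  unfold pat; split
  · exact hd
  · split <;> omega

lemma shf_pat_succ (d j : ℕ) : shf 1 (pat d (j+1)) = pat d j := by
  funext i
  simp only [shf, pat]
  rcases lt_or_ge i j with h | h
  · rw [if_pos (by omega), if_pos h]
  · have h1 : ¬ (i + 1 < j + 1) := by omega
    have h2 : ¬ (i < j) := by omega
    rw [if_neg h1, if_neg h2, show i + 1 - (j+1) = i - j from by omega]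

lemma shf_pat_zero {d : ℕ} (hd : d ≤ 1) : shf 1 (pat d 0) = pat (1-d) 0 := by
  funext i
  simp only [shf, pat, Nat.not_lt_zero, if_false, Nat.sub_zero]
  by_cases h : i % 2 = 0
  · rw [if_neg (by omega), if_pos h]
    omega
  · rw [if_pos (by omega), if_neg h]

lemma pat_zero_self (d j : ℕ) (h : 0 < j) : pat d j 0 = d := by
  simp [pat, h]

lemma val_pat_alt (hq : 1 < q) :
    val q (pat 0 0) = q/(q^2-1) ∧ val q (pat 1 0) = 1/(q^2-1) := by
  have h0 : (0:ℝ) < q := lt_trans one_pos hq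
  have hq2 : (0:ℝ) < q^2 - 1 := by nlinarith
  have hq0 : q ≠ 0 := ne_of_gt h0
  have hq2' : q^2 - 1 ≠ 0 := ne_of_gt hq2
  have hb0 : ∀ i, pat 0 0 i ≤ 1 := pat_le (by norm_num) 0
  have hb1 : ∀ i, pat 1 0 i ≤ 1 := pat_le (by norm_num) 0
  have e0 : q * val q (pat 0 0) = 1 + val q (pat 1 0) := by
    have h := val_shift hq hb0
    rw [shf_pat_zero (by norm_num)] at h
    have hz : ((pat 0 0 0 : ℕ) : ℝ) = 1 := by simp [pat]
    rw [hz] at h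
    norm_num at h
    rw [h]
    field_simp
  have e1 : q * val q (pat 1 0) = val q (pat 0 0) := by
    have h := val_shift hq hb1
    rw [shf_pat_zero (le_refl 1)] at h
    have hz : ((pat 1 0 0 : ℕ) : ℝ) = 0 := by simp [pat]
    rw [hz] at h
    norm_num at h
    rw [h]
    field_simp
  have key : val q (pat 0 0) * (q^2 - 1) = q := by linear_combination q * e0 + e1
  have r0 : val q (pat 0 0) = q/(q^2-1) := by
    field_simp
    linarith [key]
  refine ⟨r0, ?_⟩
  have r1 : q * val q (pat 1 0) = q/(q^2-1) := by rw [e1, r0]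
  have r2 : q * (val q (pat 1 0) * (q^2-1)) = q * 1 := by
    field_simp at r1
    linear_combination q * r1
  have r3 := mul_left_cancel₀ hq0 r2
  field_simp
  linarith [r3]

lemma val_pat0 (hq : 1 < q) (j : ℕ) : val q (pat 0 j) = (q^j)⁻¹ * (q/(q^2-1)) := by
  have h0 : (0:ℝ) < q := lt_trans one_pos hq
  induction j with
  | zero => simpa using (val_pat_alt hq).1
  | succ j ih =>
    have hb : ∀ i, pat 0 (j+1) i ≤ 1 := pat_le (by norm_num) _
    have := val_shift hq hb
    rw [shf_pat_succ, pat_zero_self 0 (j+1) (by omega)] at this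
    rw [this, ih]
    have hp : (0:ℝ) < q^j := by positivity
    have hq2 : (0:ℝ) < q^2 - 1 := by nlinarith
    have hq0 : q ≠ 0 := ne_of_gt h0
    have hq2' : q^2 - 1 ≠ 0 := ne_of_gt hq2
    have hpj : q^j ≠ 0 := ne_of_gt hp
    rw [pow_succ q j, mul_inv]
    push_cast
    field_simp
    ring

lemma val_pat1 (hq : 1 < q) (j : ℕ) :
    val q (pat 1 j) = 1/(q-1) - (q^j)⁻¹ * (q/(q^2-1)) := by
  have h0 : (0:ℝ) < q := lt_trans one_pos hq
  have hm : (0:ℝ) < q - 1 := by linarith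
  have hq2 : (0:ℝ) < q^2 - 1 := by nlinarith
  induction j with
  | zero =>
    have := (val_pat_alt hq).2
    rw [this]
    field_simp
    ring
  | succ j ih =>
    have hb : ∀ i, pat 1 (j+1) i ≤ 1 := pat_le (le_refl 1) _
    have := val_shift hq hb
    rw [shf_pat_succ, pat_zero_self 1 (j+1) (by omega)] at this
    rw [this, ih]
    have hp : (0:ℝ) < q^j := by positivity
    have hq0 : q ≠ 0 := ne_of_gt h0
    have hm' : q - 1 ≠ 0 := ne_of_gt hm
    have hq2' : q^2 - 1 ≠ 0 := ne_of_gt hq2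
    have hpj : q^j ≠ 0 := ne_of_gt hp
    rw [pow_succ q j, mul_inv]
    push_cast
    field_simp
    ring

lemma val_const0 (hq : 1 < q) : val q (fun _ => 0) = 0 := by
  unfold val; simp

lemma val_const1 (hq : 1 < q) : val q (fun _ => 1) = 1/(q-1) := by
  have h0 : (0:ℝ) < q := lt_trans one_pos hq
  have hm : (0:ℝ) < q - 1 := by linarith
  have hb : ∀ i : ℕ, (fun _ : ℕ => 1) i ≤ 1 := fun _ => le_refl 1
  have := val_shift hq hb
  have hs : shf 1 (fun _ : ℕ => (1:ℕ)) = (fun _ => 1) := rfl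
  rw [hs] at this
  have : val q (fun _ => 1) * (q - 1) = 1 := by
    field_simp at this
    push_cast at this
    nlinarith [this]
  field_simp
  linarith

/-- binary sequences avoiding 011 and 100 are constant-then-alternating -/
lemma classify_seq {a : ℕ → ℕ} (ha : ∀ n, a n ≤ 1)
    (h011 : ∀ n, ¬ (a n = 0 ∧ a (n+1) = 1 ∧ a (n+2) = 1))
    (h100 : ∀ n, ¬ (a n = 1 ∧ a (n+1) = 0 ∧ a (n+2) = 0)) :
    (∀ n, a n = 0) ∨ (∀ n, a n = 1) ∨ (∃ j, ∀ i, a i = pat (a 0) j i) := by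
  by_cases hc : ∀ i, a i = a 0
  · rcases Nat.le_one_iff_eq_zero_or_eq_one.mp (ha 0) with h | h
    · left; intro n; rw [hc n, h]
    · right; left; intro n; rw [hc n, h]
  · push_neg at hc
    right; right
    classical
    obtain ⟨j, hjne, hjlt⟩ : ∃ j, a j ≠ a 0 ∧ ∀ i < j, a i = a 0 :=
      ⟨Nat.find hc, Nat.find_spec hc, fun i hi => by
        by_contra h; exact Nat.find_min hc hi h⟩
    have hjpos : 0 < j := by
      rcases Nat.eq_zero_or_pos j with h | h
      · exact absurd rfl (h ▸ hjne)
      · exact h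
    refine ⟨j, ?_⟩
    have step : ∀ m, a m ≠ a (m+1) → a (m+2) = a m := by
      intro m hne
      have h1 := ha m
      have h2 := ha (m+1)
      have h3 := ha (m+2)
      have h4 := h011 m
      have h5 := h100 m
      omega
    have alt : ∀ k, a (j + k) = (if k % 2 = 0 then 1 - a 0 else a 0) ∧
        a (j + k + 1) = (if (k+1) % 2 = 0 then 1 - a 0 else a 0) := by
      intro k
      induction k with
      | zero =>
        have hj0 : a j = 1 - a 0 := by
          have := ha j
          have := ha 0
          omega
        constructor
        · rw [if_pos (by norm_num), Nat.add_zero, hj0]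
        · rw [if_neg (by norm_num), Nat.add_zero]
          obtain ⟨j', rfl⟩ : ∃ j', j = j' + 1 := ⟨j - 1, by omega⟩
          have hprev : a j' = a 0 := hjlt j' (by omega)
          have hstep := step j' (by omega)
          have h1 := ha 0
          have he : j' + 1 + 1 = j' + 2 := by omega
          rw [he]
          omega
      | succ k ih =>
        obtain ⟨ih1, ih2⟩ := ih
        have he1 : j + (k+1) = j + k + 1 := by omega
        refine ⟨by rw [he1]; exact ih2, ?_⟩
        have hcur : a (j + k) ≠ a (j + k + 1) := by
          rw [ih1, ih2]
          have := ha 0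
          by_cases hk : k % 2 = 0
          · rw [if_pos hk, if_neg (by omega)]
            omega
          · rw [if_neg hk, if_pos (by omega)]
            omega
        have hstep := step (j+k) hcur
        have he2 : j + (k+1) + 1 = j + k + 2 := by omega
        rw [he2, hstep, ih1]
        have hk : (k+1+1) % 2 = k % 2 := by omega
        rw [hk]
    intro i
    rcases lt_or_ge i j with h | h
    · rw [hjlt i h]
      unfold pat
      rw [if_pos h]
    · obtain ⟨k, rfl⟩ : ∃ k, i = j + k := ⟨i - j, by omega⟩
      have hv := (alt k).1
      unfold pat
      have h1 : ¬ (j + k < j) := by omega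
      rw [hv, if_neg h1, show j + k - j = k from by omega]

/-- values of points with unique expansions -/
lemma univ_val_form (hq : 1 < q) (hq2 : q < 2) (hB : q^3 < 2*q^2 - q + 1) {z : ℝ} {a : ℕ → ℕ}
    (hz : IsExpansion q z a) (hu : ∀ c, IsExpansion q z c → c = a) :
    z = 0 ∨ z = 1/(q-1) ∨ (∃ k : ℕ, z = (q^k)⁻¹ * (q/(q^2-1))) ∨
      (∃ k : ℕ, z = 1/(q-1) - (q^k)⁻¹ * (q/(q^2-1))) := by
  have ha : ∀ n, a n ≤ 1 := hz.1
  have hzv : z = val q a := hz.2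
  have h011 := no011 hq hq2 hB hz hu
  have h100 := no100 hq hq2 hB hz hu
  rcases classify_seq ha h011 h100 with h | h | ⟨j, h⟩
  · left
    rw [hzv, show a = (fun _ => 0) from funext h, val_const0 hq]
  · right; left
    rw [hzv, show a = (fun _ => 1) from funext h, val_const1 hq]
  · have hae : a = pat (a 0) j := funext h
    rcases Nat.le_one_iff_eq_zero_or_eq_one.mp (ha 0) with h0 | h0
    · right; right; left
      exact ⟨j, by rw [hzv, hae, h0, val_pat0 hq]⟩
    · right; right; right
      exact ⟨j, by rw [hzv, hae, h0, val_pat1 hq]⟩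

end S6

namespace S6

variable {q : ℝ}

lemma one_le_qpow (hq : 1 < q) (k : ℕ) : 1 ≤ q^k := by
  induction k with
  | zero => simp
  | succ k ih => rw [pow_succ]; nlinarith

lemma qpow_le (hq : 1 < q) {c k : ℕ} (h : c ≤ k) : q^c ≤ q^k := by
  have h0 : (0:ℝ) < q := lt_trans one_pos hq
  obtain ⟨d, rfl⟩ := Nat.exists_eq_add_of_le h
  rw [pow_add]
  have := one_le_qpow hq d
  nlinarith [pow_pos h0 c]

section keys

variable (hq1 : 1 < q) (h2 : q < 2) (hA : q + 1 < q^2) (hB : q^3 < 2*q^2 - q + 1)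
include hq1 h2 hA hB

lemma facts :
    (1 < 2*q + q^2 - q^3) ∧ (2*q + q^2 - q^3 < 2) ∧ (2 < 2*q^2 + q^3 - q^4) ∧
    (2*q^2 + q^3 - q^4 < q + 1) ∧ (q + 1 < 2*q^3 + q^4 - q^5) ∧ (2 < 2*q^3 + q^4 - q^5) ∧
    (q^3 + 1 < 2*q^4 + q^5 - q^6) := by
  have h0 : (0:ℝ) < q := lt_trans one_pos hq1
  have hm : (0:ℝ) < q - 1 := by linarith
  have h2m : (0:ℝ) < 2 - q := by linarith
  have hApos : (0:ℝ) < q^2 - q - 1 := by linarith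
  have hA2 : (2:ℝ) < q^2 := by linarith
  have hB1 : q^4 < 2*q^3 - q^2 + q := by nlinarith [mul_lt_mul_of_pos_left hB h0]
  have hB2 : q^5 < 2*q^4 - q^3 + q^2 := by nlinarith [mul_lt_mul_of_pos_left hB1 h0]
  have f1 : 1 < 2*q + q^2 - q^3 := by nlinarith [hB, mul_pos hm h2m]
  have f2 : 2*q + q^2 - q^3 < 2 := by nlinarith [mul_pos h0 hApos, h2m]
  have f3 : 2 < 2*q^2 + q^3 - q^4 := by nlinarith [hB1, mul_pos hApos h2m]
  have f4 : 2*q^2 + q^3 - q^4 < q + 1 := by nlinarith [mul_pos hApos (by nlinarith : (0:ℝ) < q^2 - 1)]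
  have hA4 : q + 2 < q^3 := by nlinarith [mul_pos h0 hApos, hA2]
  have f5 : q + 1 < 2*q^3 + q^4 - q^5 := by
    nlinarith [hB2, hB1, mul_pos (by linarith : (0:ℝ) < q + 1) hApos]
  have f6 : 2 < 2*q^3 + q^4 - q^5 := by nlinarith [hB2, hB1, hA4]
  have f7 : q^3 + 1 < 2*q^4 + q^5 - q^6 := by
    have hBpos : (0:ℝ) < 2*q^2 - q + 1 - q^3 := by linarith
    have hfac : (0:ℝ) < (q-1)*(q+1)^2 := by positivity
    nlinarith [mul_pos hBpos hfac]
  exact ⟨f1, f2, f3, f4, f5, f6, f7⟩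

lemma key1 (m : ℕ) (hE : q * (q - 1) = (2 - q) * (q^2 - 1) * q^m) : False := by
  obtain ⟨f1, f2, f3, f4, f5, f6, f7⟩ := facts hq1 h2 hA hB
  have h0 : (0:ℝ) < q := lt_trans one_pos hq1
  have hm : (0:ℝ) < q - 1 := by linarith
  have hApos : (0:ℝ) < q^2 - q - 1 := by linarith
  have hA2 : (2:ℝ) < q^2 := by linarith
  match m with
  | 0 =>
    rw [pow_zero, mul_one] at hE
    have hid : q * (q - 1) - (2 - q) * (q^2 - 1) = (q-1)*(q^2-2) := by ring
    have hpos : (0:ℝ) < (q-1)*(q^2-2) := mul_pos hm (by linarith)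
    linarith
  | 1 =>
    rw [pow_one] at hE
    have hid : q * (q - 1) - (2 - q) * (q^2 - 1) * q = q*(q-1)*(q^2-q-1) := by ring
    have hpos : (0:ℝ) < q*(q-1)*(q^2-q-1) := mul_pos (mul_pos h0 hm) hApos
    linarith
  | 2 =>
    have hid : (2 - q) * (q^2 - 1) * q^2 - q * (q - 1) = q*(q-1)*(2*q+q^2-q^3-1) := by ring
    have hpos : (0:ℝ) < q*(q-1)*(2*q+q^2-q^3-1) := mul_pos (mul_pos h0 hm) (by linarith)
    linarith
  | 3 =>
    have hid : (2 - q) * (q^2 - 1) * q^3 - q * (q - 1) = q*(q-1)*(2*q^2+q^3-q^4-1) := by ring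
    have hpos : (0:ℝ) < q*(q-1)*(2*q^2+q^3-q^4-1) := mul_pos (mul_pos h0 hm) (by linarith)
    linarith
  | (n+4) =>
    have h1 : (1:ℝ) ≤ q^n := one_le_qpow hq1 n
    have hfac : (0:ℝ) < (2-q)*(q^2-1) := by nlinarith
    have hp4 : (0:ℝ) < q^4 := by positivity
    rw [pow_add] at hE
    have hge : (2-q)*(q^2-1)*q^4 ≤ (2-q)*(q^2-1)*(q^n*q^4) := by
      have h3 : q^4 ≤ q^n*q^4 := le_mul_of_one_le_left (le_of_lt hp4) h1
      exact mul_le_mul_of_nonneg_left h3 hfac.le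
    have hid : (2-q)*(q^2-1)*q^4 = q*(q-1)*(2*q^3+q^4-q^5) := by ring
    have hpos : (0:ℝ) < q*(q-1)*(2*q^3+q^4-q^5-2) := mul_pos (mul_pos h0 hm) (by linarith)
    have hqm : (0:ℝ) < q*(q-1) := mul_pos h0 hm
    linarith [hE, hge, hid, hpos, hqm]

lemma key2 (k m : ℕ) (hkm : k ≤ m) (hD : q^4 ≠ 2*q^2 + q + 1)
    (hE : q * (q - 1) * (q^m + q^k) = (2 - q) * (q^2 - 1) * (q^k * q^m)) : False := by
  obtain ⟨f1, f2, f3, f4, f5, f6, f7⟩ := facts hq1 h2 hA hB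
  have h0 : (0:ℝ) < q := lt_trans one_pos hq1
  have hm : (0:ℝ) < q - 1 := by linarith
  have hApos : (0:ℝ) < q^2 - q - 1 := by linarith
  have hA2 : (2:ℝ) < q^2 := by linarith
  have hq1p : (0:ℝ) < q + 1 := by linarith
  rcases Nat.lt_or_ge k 2 with hk2 | hk2
  · interval_cases k
    · -- k = 0
      rw [pow_zero] at hE
      have hid : q * (q - 1) * (q^m + 1) - (2 - q) * (q^2 - 1) * (1 * q^m)
          = q*(q-1) + q^m*((q-1)*(q^2-2)) := by ring
      have hp1 : (0:ℝ) < q*(q-1) := mul_pos h0 hm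
      have hp2 : (0:ℝ) < q^m*((q-1)*(q^2-2)) :=
        mul_pos (pow_pos h0 m) (mul_pos hm (by linarith))
      linarith
    · -- k = 1
      rw [pow_one] at hE
      have hid : q * (q - 1) * (q^m + q) - (2 - q) * (q^2 - 1) * (q * q^m)
          = q^2*(q-1) + q^m*(q*(q-1)*(q^2-q-1)) := by ring
      have hp1 : (0:ℝ) < q^2*(q-1) := mul_pos (by positivity) hm
      have hp2 : (0:ℝ) < q^m*(q*(q-1)*(q^2-q-1)) :=
        mul_pos (pow_pos h0 m) (mul_pos (mul_pos h0 hm) hApos)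
      linarith
  · rcases Nat.lt_or_ge m 5 with hm5 | hm5
    · have hk5 : k < 5 := lt_of_le_of_lt hkm hm5
      interval_cases k
      · interval_cases m
        · -- (2,2)
          have hid : q * (q - 1) * (q^2 + q^2) - (2 - q) * (q^2 - 1) * (q^2 * q^2)
              = q^3*(q-1)*(2 - (2*q+q^2-q^3)) := by ring
          have hpos : (0:ℝ) < q^3*(q-1)*(2 - (2*q+q^2-q^3)) :=
            mul_pos (mul_pos (pow_pos h0 3) hm) (by linarith)
          linarith
        · -- (2,3)
          have hgap23 : (0:ℝ) < q^3 - 2*q^2 + 1 := by linarith [mul_pos hm hApos]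
          have hid : q * (q - 1) * (q^3 + q^2) - (2 - q) * (q^2 - 1) * (q^2 * q^3)
              = q^3*(q-1)*(q+1)*(q^3-2*q^2+1) := by ring
          have hpos : (0:ℝ) < q^3*(q-1)*(q+1)*(q^3-2*q^2+1) :=
            mul_pos (mul_pos (mul_pos (pow_pos h0 3) hm) hq1p) hgap23
          linarith
        · -- (2,4)
          have heq0 : q^3*(q-1)*((q-1)*(q^4-2*q^2-q-1)) = 0 := by linear_combination hE
          rcases mul_eq_zero.mp heq0 with h | h
          · have := mul_pos (pow_pos h0 3) hm
            linarith
          · rcases mul_eq_zero.mp h with h | h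
            · linarith
            · exact hD (by linarith)
      · interval_cases m
        · -- (3,3)
          have hid : (2 - q) * (q^2 - 1) * (q^3 * q^3) - q * (q - 1) * (q^3 + q^3)
              = q^4*(q-1)*(2*q^2+q^3-q^4-2) := by ring
          have hpos : (0:ℝ) < q^4*(q-1)*(2*q^2+q^3-q^4-2) :=
            mul_pos (mul_pos (pow_pos h0 4) hm) (by linarith)
          linarith
        · -- (3,4)
          have hB1 : q^4 < 2*q^3 - q^2 + q := by
            have := mul_lt_mul_of_pos_left hB h0
            nlinarith [this]
          have hgap34 : (0:ℝ) < 2*q^3 - q^4 - 1 := by linarith [hB1, hA]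
          have hid : (2 - q) * (q^2 - 1) * (q^3 * q^4) - q * (q - 1) * (q^4 + q^3)
              = q^4*(q-1)*(q+1)*(2*q^3-q^4-1) := by ring
          have hpos : (0:ℝ) < q^4*(q-1)*(q+1)*(2*q^3-q^4-1) :=
            mul_pos (mul_pos (mul_pos (pow_pos h0 4) hm) hq1p) hgap34
          linarith
      · interval_cases m
        -- (4,4)
        have hid : (2 - q) * (q^2 - 1) * (q^4 * q^4) - q * (q - 1) * (q^4 + q^4)
            = q^5*(q-1)*(2*q^3+q^4-q^5-2) := by ring
        have hpos : (0:ℝ) < q^5*(q-1)*(2*q^3+q^4-q^5-2) :=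
          mul_pos (mul_pos (pow_pos h0 5) hm) (by linarith)
        linarith
    · -- generic: 2 ≤ k, 5 ≤ m
      have hpk2 : q^2 ≤ q^k := qpow_le hq1 hk2
      have hpm5 : q^5 ≤ q^m := qpow_le hq1 hm5
      have hR : (0:ℝ) < 2 + q - q^2 := by
        linarith [mul_pos (by linarith : (0:ℝ) < 2 - q) hq1p]
      have e2 : (2+q-q^2)*q^2 ≤ (2+q-q^2)*q^k :=
        mul_le_mul_of_nonneg_left hpk2 hR.le
      have e2' : (0:ℝ) < (2+q-q^2)*q^2 - q := by
        linarith [mul_lt_mul_of_pos_left f1 h0]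
      have e3 : q^5*((2+q-q^2)*q^k - q) ≤ q^m*((2+q-q^2)*q^k - q) := by
        apply mul_le_mul_of_nonneg_right hpm5 (by linarith)
      have e4 : (0:ℝ) < (2+q-q^2)*q^5 - q := by
        linarith [mul_pos h0 (by linarith : (0:ℝ) < 2*q^4 + q^5 - q^6 - q^3 - 1), pow_pos h0 4]
      have e5 : q^2*((2+q-q^2)*q^5 - q) ≤ q^k*((2+q-q^2)*q^5 - q) :=
        mul_le_mul_of_nonneg_right hpk2 e4.le
      have e6 : (0:ℝ) < q^3*((2+q-q^2)*q^4 - q^3 - 1) :=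
        mul_pos (pow_pos h0 3) (by linarith [f7])
      have hT : (0:ℝ) < (2+q-q^2)*(q^k*q^m) - q*q^m - q*q^k := by linarith [e3, e5, e6]
      have hid : (2 - q) * (q^2 - 1) * (q^k * q^m) - q * (q - 1) * (q^m + q^k)
          = (q-1)*((2+q-q^2)*(q^k*q^m) - q*q^m - q*q^k) := by ring
      have hpos := mul_pos hm hT
      linarith

end keys

end S6

namespace S6

variable {q : ℝ}

lemma no_double (hq1 : 1 < q) (h2 : q < 2) (hA : q + 1 < q^2) (hB : q^3 < 2*q^2 - q + 1)
    (hD : q^4 ≠ 2*q^2 + q + 1) {u : ℝ} (hu0 : 0 ≤ u) (hu1 : u + 1 ≤ 1/(q-1))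
    (hu : ∃ a, IsExpansion q u a ∧ ∀ c, IsExpansion q u c → c = a)
    (hv : ∃ b, IsExpansion q (u+1) b ∧ ∀ c, IsExpansion q (u+1) c → c = b) : False := by
  have h0 : (0:ℝ) < q := lt_trans one_pos hq1
  have hm : (0:ℝ) < q - 1 := by linarith
  have hq20 : (0:ℝ) < q^2 - 1 := by nlinarith
  have hq0 : q ≠ 0 := ne_of_gt h0
  have hmne : q - 1 ≠ 0 := ne_of_gt hm
  have hq2ne : q^2 - 1 ≠ 0 := ne_of_gt hq20
  have hrpos : (0:ℝ) < q/(q^2-1) := by positivity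
  have hrlt : q/(q^2-1) < 1 := by rw [div_lt_one hq20]; linarith
  have hMgt : 1 < 1/(q-1) := by rw [lt_div_iff₀ hm]; linarith
  have hPpos : ∀ k : ℕ, (0:ℝ) < (q^k)⁻¹ := fun k => by positivity
  have hPle : ∀ k : ℕ, (q^k)⁻¹ ≤ 1 := fun k => by
    have h1 := one_le_qpow hq1 k
    have hp : (0:ℝ) < q^k := by positivity
    rw [← one_div, div_le_one hp]
    exact h1
  have hPRle : ∀ k : ℕ, (q^k)⁻¹ * (q/(q^2-1)) < 1 := fun k => by
    have := mul_le_of_le_one_left hrpos.le (hPle k)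
    linarith
  have conv1 : ∀ m : ℕ, (q^m)⁻¹ * (q/(q^2-1)) = 1/(q-1) - 1 → False := by
    intro m hEq
    apply key1 hq1 h2 hA hB m
    have hp : (q:ℝ)^m ≠ 0 := by positivity
    field_simp at hEq
    linear_combination hEq
  have conv2 : ∀ k m : ℕ,
      (q^k)⁻¹ * (q/(q^2-1)) + (q^m)⁻¹ * (q/(q^2-1)) = 1/(q-1) - 1 → False := by
    intro k m hEq
    have hpk : (q:ℝ)^k ≠ 0 := by positivity
    have hpm : (q:ℝ)^m ≠ 0 := by positivity
    rcases le_total k m with hkm | hmk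
    · apply key2 hq1 h2 hA hB k m hkm hD
      field_simp at hEq
      have hEq2 : (q^2-1) * (q*(q-1)*(q^m+q^k)) = (q^2-1) * ((2-q)*(q^2-1)*(q^k*q^m)) := by
        linear_combination (q^2-1) * hEq
      exact mul_left_cancel₀ hq2ne hEq2
    · apply key2 hq1 h2 hA hB m k hmk hD
      field_simp at hEq
      have hEq2 : (q^2-1) * (q*(q-1)*(q^k+q^m)) = (q^2-1) * ((2-q)*(q^2-1)*(q^m*q^k)) := by
        linear_combination (q^2-1) * hEq
      exact mul_left_cancel₀ hq2ne hEq2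
  obtain ⟨a, ha, hua⟩ := hu
  obtain ⟨b, hb, hvb⟩ := hv
  have h1 := univ_val_form hq1 h2 hB ha hua
  have h2' := univ_val_form hq1 h2 hB hb hvb
  rcases h1 with hu' | hu' | ⟨k, hu'⟩ | ⟨k, hu'⟩
  · -- u = 0
    rcases h2' with hv' | hv' | ⟨m, hv'⟩ | ⟨m, hv'⟩
    · linarith
    · linarith
    · linarith [hPRle m]
    · exact conv1 m (by linarith)
  · -- u = 1/(q-1)
    linarith
  · -- u = (q^k)⁻¹ R
    have hukpos : (0:ℝ) < (q^k)⁻¹ * (q/(q^2-1)) := mul_pos (hPpos k) hrpos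
    rcases h2' with hv' | hv' | ⟨m, hv'⟩ | ⟨m, hv'⟩
    · linarith
    · exact conv1 k (by linarith)
    · linarith [hPRle m]
    · exact conv2 k m (by linarith)
  · -- u = 1/(q-1) - (q^k)⁻¹ R
    linarith [hPRle k]

end S6

namespace S6

variable {q : ℝ}

def glue (a : ℕ → ℕ) (n : ℕ) (c : ℕ → ℕ) : ℕ → ℕ := fun i => if i < n then a i else c (i - n)

lemma glue_zero (a c : ℕ → ℕ) : glue a 0 c = c := by
  funext i; simp [glue]

lemma glue_succ (a : ℕ → ℕ) (n : ℕ) (c : ℕ → ℕ) :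
    glue a (n+1) c = cons (a 0) (glue (shf 1 a) n c) := by
  funext i
  cases i with
  | zero => simp [glue, cons]
  | succ k =>
    simp only [glue, cons, shf]
    rcases lt_or_ge k n with h | h
    · rw [if_pos (by omega), if_pos h]
    · rw [if_neg (by omega), if_neg (by omega), show k + 1 - (n+1) = k - n from by omega]

lemma glue_exp (hq : 1 < q) {z : ℝ} {c : ℕ → ℕ} {a : ℕ → ℕ} (ha : ∀ i, a i ≤ 1)
    (hc : IsExpansion q z c) (n : ℕ) :
    IsExpansion q ((∑ i ∈ Finset.range n, (a i : ℝ)/q^(i+1)) + z/q^n) (glue a n c) := by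
  have h0 : (0:ℝ) < q := lt_trans one_pos hq
  induction n generalizing a with
  | zero =>
    rw [glue_zero]
    simpa using hc
  | succ n ih =>
    rw [glue_succ]
    have ih' := ih (a := shf 1 a) (fun i => ha _)
    have hcons := exp_cons hq ih' (ha 0)
    have he : (((a 0 : ℕ) : ℝ) +
        ((∑ i ∈ Finset.range n, (shf 1 a i : ℝ)/q^(i+1)) + z/q^n))/q
        = (∑ i ∈ Finset.range (n+1), (a i : ℝ)/q^(i+1)) + z/q^(n+1) := by
      rw [Finset.sum_range_succ']
      have hsum : (∑ i ∈ Finset.range n, (shf 1 a i : ℝ)/q^(i+1))/q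
          = ∑ i ∈ Finset.range n, (a (i+1) : ℝ)/q^(i+1+1) := by
        rw [Finset.sum_div]
        apply Finset.sum_congr rfl
        intro i _
        simp only [shf]
        rw [div_div, ← pow_succ]
      rw [add_div, add_div, hsum]
      have h1 : z/q^n/q = z/q^(n+1) := by rw [div_div, ← pow_succ]
      have h2 : ((a 0 : ℕ) : ℝ)/q = (a 0 : ℝ)/q^(0+1) := by norm_num
      rw [h1, h2]
      ring
    rwa [he] at hcons

lemma glue_apply_big (a : ℕ → ℕ) (n d : ℕ) (c : ℕ → ℕ) (i : ℕ) :
    glue a n (cons d c) (n + 1 + i) = c i := by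
  unfold glue
  rw [if_neg (by omega), show n + 1 + i - n = i + 1 from by omega]
  rfl

lemma glue_apply_mid (a : ℕ → ℕ) (n d : ℕ) (c : ℕ → ℕ) :
    glue a n (cons d c) n = d := by
  unfold glue
  rw [if_neg (by omega), Nat.sub_self]
  rfl

lemma glue_inj (a : ℕ → ℕ) (n d : ℕ) :
    Function.Injective (fun c : ℕ → ℕ => glue a n (cons d c)) := by
  intro c1 c2 hcc
  funext i
  have h1 := glue_apply_big a n d c1 i
  have h2 := glue_apply_big a n d c2 i
  rw [← h1, ← h2]
  exact congrFun hcc (n + 1 + i)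

lemma descent (hq1 : 1 < q) (h2 : q < 2) (hA : q + 1 < q^2) (hB : q^3 < 2*q^2 - q + 1)
    (hD : q^4 ≠ 2*q^2 + q + 1) :
    ∀ N : ℕ, ∀ x : ℝ, (expansionsOf q x).Finite → (expansionsOf q x).ncard ≤ N →
      ∀ a ∈ expansionsOf q x, ∀ b ∈ expansionsOf q x, a = b := by
  have h0 : (0:ℝ) < q := lt_trans one_pos hq1
  intro N
  induction N with
  | zero =>
    intro x hfin hcard a hax b hbx
    exfalso
    have hz : (expansionsOf q x).ncard = 0 := le_antisymm hcard (Nat.zero_le _)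
    rw [Set.ncard_eq_zero hfin] at hz
    rw [hz] at hax
    exact hax
  | succ N IH =>
    intro x hfin hcard a hax b hbx
    by_contra hab
    have hne : ∃ n, a n ≠ b n := by
      by_contra h; push_neg at h; exact hab (funext h)
    classical
    set n₀ := Nat.find hne with hn₀
    have hdiff : a n₀ ≠ b n₀ := Nat.find_spec hne
    have hagree : ∀ i < n₀, a i = b i := fun i hi => by
      by_contra h; exact Nat.find_min hne hi h
    have ha : IsExpansion q x a := hax
    have hb : IsExpansion q x b := hbx
    have core : ∀ a b : ℕ → ℕ, IsExpansion q x a → IsExpansion q x b →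
        (∀ i < n₀, a i = b i) → a n₀ = 0 → b n₀ = 1 → False := by
      intro a b ha hb hag ha0 hb0
      have hpn : (0:ℝ) < q^n₀ := by positivity
      obtain ⟨hpart_a, hexp_a⟩ := exp_partial hq1 ha n₀
      obtain ⟨hpart_b, hexp_b⟩ := exp_partial hq1 hb n₀
      have hS : (∑ i ∈ Finset.range n₀, ((a i : ℝ))/q^(i+1))
          = ∑ i ∈ Finset.range n₀, ((b i : ℝ))/q^(i+1) :=
        Finset.sum_congr rfl (fun i hi => by rw [hag i (Finset.mem_range.mp hi)])
      have hw : val q (shf n₀ a) = val q (shf n₀ b) := by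
        have h1 : val q (shf n₀ a)/q^n₀ = val q (shf n₀ b)/q^n₀ := by
          linarith [hpart_a, hpart_b, hS]
        field_simp at h1
        exact h1
      have hsa : shf 1 (shf n₀ a) = shf (n₀+1) a := by
        funext i; simp only [shf]; congr 1; omega
      have hsb : shf 1 (shf n₀ b) = shf (n₀+1) b := by
        funext i; simp only [shf]; congr 1; omega
      have hda : (shf n₀ a) 0 = 0 := by
        show a (0 + n₀) = 0
        rwa [Nat.zero_add]
      have hdb : (shf n₀ b) 0 = 1 := by
        show b (0 + n₀) = 1
        rwa [Nat.zero_add]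
      have hva := val_shift hq1 (a := shf n₀ a) (fun i => ha.1 _)
      rw [hsa, hda] at hva
      have hvb := val_shift hq1 (a := shf n₀ b) (fun i => hb.1 _)
      rw [hsb, hdb] at hvb
      set ya := val q (shf (n₀+1) a) with hya_def
      set yb := val q (shf (n₀+1) b) with hyb_def
      have hya : ya = q * val q (shf n₀ a) := by
        rw [hva]; push_cast; field_simp; ring
      have hyb : yb = q * val q (shf n₀ a) - 1 := by
        rw [hw, hvb]; push_cast; field_simp; ring
      have hrel : ya = yb + 1 := by rw [hya, hyb]; ring
      have hyb0 : 0 ≤ yb := val_nonneg hq1 (fun i => hb.1 _)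
      have hyaM : ya ≤ 1/(q-1) := val_le hq1 (fun i => ha.1 _)
      -- membership of glued expansions
      have hxa : ∀ d : ℕ, d ≤ 1 → ∀ y : ℝ, ((d : ℝ) + y)/q = val q (shf n₀ a) →
          ∀ c, IsExpansion q y c → IsExpansion q x (glue a n₀ (cons d c)) := by
        intro d hd y hy c hc
        have hcons := exp_cons hq1 hc hd
        have hglue := glue_exp hq1 ha.1 hcons n₀
        have he : (∑ i ∈ Finset.range n₀, (a i : ℝ)/q^(i+1)) + (((d:ℝ) + y)/q)/q^n₀ = x := by
          rw [hy]
          linarith [hpart_a]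
        rwa [he] at hglue
      have hmem_a : ∀ c, IsExpansion q ya c → IsExpansion q x (glue a n₀ (cons 0 c)) := by
        intro c hc
        apply hxa 0 (by norm_num) ya _ c hc
        rw [hya]
        push_cast
        field_simp
        ring
      have hmem_b : ∀ c, IsExpansion q yb c → IsExpansion q x (glue a n₀ (cons 1 c)) := by
        intro c hc
        apply hxa 1 (by norm_num) yb _ c hc
        rw [hyb]
        push_cast
        field_simp
        ring
      -- distinguished elements
      have hexp_ya : IsExpansion q ya (shf (n₀+1) a) := exp_val hq1 (fun i => ha.1 _)
      have hexp_yb : IsExpansion q yb (shf (n₀+1) b) := exp_val hq1 (fun i => hb.1 _)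
      have hgb : glue a n₀ (cons 1 (shf (n₀+1) b)) ∈ expansionsOf q x :=
        hmem_b _ hexp_yb
      have hga : glue a n₀ (cons 0 (shf (n₀+1) a)) ∈ expansionsOf q x :=
        hmem_a _ hexp_ya
      -- generic cardinality bound
      have hbound : ∀ d d' : ℕ, d ≠ d' →
          (∀ c, IsExpansion q (if d = 0 then ya else yb) c →
            IsExpansion q x (glue a n₀ (cons d c))) →
          glue a n₀ (cons d' (if d' = 0 then shf (n₀+1) a else shf (n₀+1) b)) ∈ expansionsOf q x →
          (expansionsOf q (if d = 0 then ya else yb)).Finite ∧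
            (expansionsOf q (if d = 0 then ya else yb)).ncard ≤ N := by
        intro d d' hdd hmem hg'
        set y := if d = 0 then ya else yb with hy
        set g' := glue a n₀ (cons d' (if d' = 0 then shf (n₀+1) a else shf (n₀+1) b)) with hg'def
        have himg : (fun c => glue a n₀ (cons d c)) '' (expansionsOf q y)
            ⊆ expansionsOf q x \ {g'} := by
          rintro w ⟨c, hc, rfl⟩
          refine ⟨hmem c hc, ?_⟩
          simp only [Set.mem_singleton_iff]
          intro heq
          have h1 := congrFun heq n₀
          rw [glue_apply_mid, hg'def, glue_apply_mid] at h1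
          exact hdd (by omega)
        have hfin_img : ((fun c => glue a n₀ (cons d c)) '' (expansionsOf q y)).Finite :=
          hfin.subset (himg.trans Set.diff_subset)
        have hfin_y : (expansionsOf q y).Finite :=
          Set.Finite.of_finite_image hfin_img (glue_inj a n₀ d).injOn
        refine ⟨hfin_y, ?_⟩
        have h1 : (expansionsOf q y).ncard
            = ((fun c => glue a n₀ (cons d c)) '' (expansionsOf q y)).ncard :=
          (Set.ncard_image_of_injective _ (glue_inj a n₀ d)).symm
        have h2 : ((fun c => glue a n₀ (cons d c)) '' (expansionsOf q y)).ncard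
            ≤ (expansionsOf q x \ {g'}).ncard :=
          Set.ncard_le_ncard himg hfin.diff
        have h3 : (expansionsOf q x \ {g'}).ncard = (expansionsOf q x).ncard - 1 :=
          Set.ncard_diff_singleton_of_mem hg'
        have h4 : 0 < (expansionsOf q x).ncard := (Set.ncard_pos hfin).mpr ⟨a, ha⟩
        omega
      have hya_bound := hbound 0 1 (by norm_num) (by simpa using hmem_a) (by simpa using hgb)
      have hyb_bound := hbound 1 0 (by norm_num) (by simpa using hmem_b) (by simpa using hga)
      simp only [if_pos rfl] at hya_bound
      norm_num at hyb_bound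
      -- unique expansions at ya and yb
      have hu_ya := IH ya hya_bound.1 hya_bound.2
      have hu_yb := IH yb hyb_bound.1 hyb_bound.2
      apply no_double hq1 h2 hA hB hD hyb0 (by rw [← hrel]; exact hyaM)
      · exact ⟨shf (n₀+1) b, hexp_yb, fun c hc => hu_yb c hc _ hexp_yb⟩
      · rw [← hrel]
        exact ⟨shf (n₀+1) a, hexp_ya, fun c hc => hu_ya c hc _ hexp_ya⟩
    have hA1 := ha.1 n₀
    have hB1 := hb.1 n₀
    have hcases : (a n₀ = 0 ∧ b n₀ = 1) ∨ (a n₀ = 1 ∧ b n₀ = 0) := by omega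
    rcases hcases with ⟨h1', h2'⟩ | ⟨h1', h2'⟩
    · exact core a b ha hb hagree h1' h2'
    · exact core b a hb ha (fun i hi => (hagree i hi).symm) h2' h1'

end S6

set_option maxHeartbeats 1600000 in
theorem stmt6 (q2 qf : ℝ)
    (hq2 : q2 ∈ Set.Ioo (1:ℝ) 2) (hq2eq : q2 ^ 4 = 2 * q2 ^ 2 + q2 + 1)
    (hqf : qf ∈ Set.Ioo (1:ℝ) 2) (hqfeq : qf ^ 3 = 2 * qf ^ 2 - qf + 1)
    (q : ℝ) (hq : q ∈ Set.Ioo ((1 + Real.sqrt 5) / 2) q2 ∪ Set.Ioo q2 qf) :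
    ∀ x ∈ Set.Icc (0:ℝ) (1 / (q - 1)),
      Cardinal.mk (expansionsOf q x) = 1 ∨ (expansionsOf q x).Infinite := by
  have hq21 : (1:ℝ) < q2 := hq2.1
  have hq22 : q2 < 2 := hq2.2
  have hqf1 : (1:ℝ) < qf := hqf.1
  have hqf2 : qf < 2 := hqf.2
  have hs : Real.sqrt 5 ^ 2 = 5 := Real.sq_sqrt (by norm_num)
  have hs0 : (0:ℝ) ≤ Real.sqrt 5 := Real.sqrt_nonneg 5
  have hs2 : 2 < Real.sqrt 5 := by nlinarith
  have hs3 : Real.sqrt 5 < 3 := by nlinarith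
  set G := (1 + Real.sqrt 5)/2 with hGdef
  have hGsq : G^2 = G + 1 := by rw [hGdef]; linear_combination (1/4 : ℝ) * hs
  have hG15 : 1.5 < G := by rw [hGdef]; linarith
  have hG2 : G < 2 := by rw [hGdef]; linarith
  -- q2 > G
  have hq2G : G < q2 := by
    by_contra hcon
    push_neg at hcon
    have h1 : q2^2 ≤ G + 1 := by
      nlinarith [mul_nonneg (sub_nonneg.mpr hcon) (by linarith : (0:ℝ) ≤ G + q2)]
    nlinarith [hq2eq, mul_nonneg (by linarith : (0:ℝ) ≤ G + 1 - q2^2)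
      (by nlinarith [hq2.1] : (0:ℝ) ≤ q2^2 + G - 1), hq2.1, hGsq]
  -- q2 < 1.73
  have hq2lt : q2 < 1.73 := by
    by_contra hcon
    push_neg at hcon
    have h29 : (2.9929:ℝ) ≤ q2^2 := by nlinarith
    nlinarith [hq2eq, mul_nonneg (sub_nonneg.mpr h29) (sq_nonneg q2),
      sq_nonneg (q2 - 1.73), hcon, hq2.2]
  -- cubic positivity for hD
  have hC : ∀ t u : ℝ, 1.5 < t → 1.5 < u →
      0 < t^3 + t^2*u + t*u^2 + u^3 - 2*t - 2*u - 1 := by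
    intro t u ht hu
    have h1 : (0:ℝ) < t := by linarith
    have h2 : (0:ℝ) < u := by linarith
    have h3 : (2.25:ℝ) ≤ t^2 := by nlinarith [sq_nonneg (t - 1.5)]
    have h4 : (2.25:ℝ) ≤ u^2 := by nlinarith [sq_nonneg (u - 1.5)]
    linarith [mul_le_mul_of_nonneg_right h3 h1.le, mul_le_mul_of_nonneg_right h4 h2.le,
      mul_le_mul_of_nonneg_right h3 h2.le, mul_le_mul_of_nonneg_right h4 h1.le]
  -- common facts
  have hGq : G < q := by
    rcases hq with h | h
    · exact h.1
    · linarith [h.1]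
  have hq1 : 1 < q := by linarith
  have h2 : q < 2 := by
    rcases hq with h | h
    · linarith [h.2, hq2.2]
    · linarith [h.2, hqf.2]
  have hA : q + 1 < q^2 := by
    nlinarith [mul_pos (sub_pos.mpr hGq) (by linarith : (0:ℝ) < q + G - 1), hGsq]
  have hB : q^3 < 2*q^2 - q + 1 := by
    rcases hq with h | h
    · -- q < q2 < 1.73
      have hq173 : q < 1.73 := by linarith [h.2]
      have hA' : (0:ℝ) < q - 1 := by linarith
      have hB' : (0:ℝ) < 1.73 - q := by linarith
      linarith [mul_pos hA' hB', mul_nonneg (sq_nonneg (q-1)) hB'.le]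
    · -- q < qf, and qf*(qf-1)^2 = 1
      have hqfB : qf*(qf-1)^2 = 1 := by linear_combination hqfeq
      have hlt : q < qf := h.2
      have h1 : q*(q-1)^2 ≤ qf*(q-1)^2 :=
        mul_le_mul_of_nonneg_right hlt.le (sq_nonneg _)
      have h2' : qf*(q-1)^2 < qf*(qf-1)^2 := by
        apply mul_lt_mul_of_pos_left _ (by linarith [hqf.1] : (0:ℝ) < qf)
        nlinarith [mul_pos (sub_pos.mpr hlt) (by linarith [hq2G, hq2.1] : (0:ℝ) < qf + q - 2)]
      nlinarith [h1, h2', hqfB]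
  have hD : q^4 ≠ 2*q^2 + q + 1 := by
    intro hEq
    rcases hq with h | h
    · have hfac := hC q2 q (by linarith) (by linarith)
      nlinarith [mul_pos (sub_pos.mpr h.2) hfac, hq2eq, hEq]
    · have hfac := hC q q2 (by linarith) (by linarith)
      nlinarith [mul_pos (sub_pos.mpr h.1) hfac, hq2eq, hEq]
  intro x hx
  by_cases hinf : (expansionsOf q x).Infinite
  · right; exact hinf
  left
  have hfin : (expansionsOf q x).Finite := Set.not_infinite.mp hinf
  obtain ⟨a, ha⟩ := S6.exists_exp hq1 h2 hx.1 hx.2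
  have hsub := S6.descent hq1 h2 hA hB hD (expansionsOf q x).ncard x hfin le_rfl
  have hset : expansionsOf q x = {a} := by
    apply Set.eq_singleton_iff_unique_mem.mpr
    exact ⟨ha, fun b hb => hsub b hb a ha⟩
  rw [hset]
  exact Cardinal.mk_singleton a

end
end

section
/- For q ∈ (G, q_2) ∪ (q_2, q_f), every x in the switch region J_q = [1/q, 1/(q(q-1))] has infinitely many expansions in base q. Here G = (1+√5)/2, q_2 is the root in (1,2) of x⁴ = 2x² + x + 1, and q_f is the root in (1,2) of x³ = 2x² − x + 1. -/
noncomputable section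

namespace Stmt7Aux

open Filter

/-- prepend a digit to a digit sequence -/
def dcons (d : ℕ) (a : ℕ → ℕ) : ℕ → ℕ
  | 0 => d
  | n+1 => a n

/-- prepend a word to a digit sequence -/
def appS : List ℕ → (ℕ → ℕ) → ℕ → ℕ
  | [], s => s
  | d :: t, s => dcons d (appS t s)

lemma appS_append (w1 w2 : List ℕ) (s : ℕ → ℕ) :
    appS (w1 ++ w2) s = appS w1 (appS w2 s) := by
  induction w1 with
  | nil => rfl
  | cons d t ih => simp [appS, ih]

lemma appS_add (w : List ℕ) (s : ℕ → ℕ) (n : ℕ) : appS w s (w.length + n) = s n := by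
  induction w with
  | nil => simp [appS]
  | cons d t ih =>
    have : (d :: t).length + n = (t.length + n) + 1 := by simp; omega
    rw [this]
    show appS t s (t.length + n) = s n
    exact ih

lemma appS_cons_zero (d : ℕ) (t : List ℕ) (s : ℕ → ℕ) : appS (d :: t) s 0 = d := rfl

lemma summable_digits {q : ℝ} (hq : 1 < q) (a : ℕ → ℕ) (ha : ∀ n, a n ≤ 1) :
    Summable (fun n => (a n : ℝ) / q ^ (n + 1)) := by
  have hq0 : (0:ℝ) < q := lt_trans one_pos hq
  have h1q : (0:ℝ) ≤ 1/q := by positivity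
  have h1q' : 1/q < 1 := by rw [div_lt_one hq0]; exact hq
  refine Summable.of_nonneg_of_le (fun n => by positivity) (fun n => ?_)
    (((summable_geometric_of_lt_one h1q h1q').mul_left (1/q)))
  have han : (a n : ℝ) ≤ 1 := by exact_mod_cast ha n
  calc (a n : ℝ) / q ^ (n+1) ≤ 1 / q ^ (n+1) := by gcongr
    _ = 1/q * (1/q)^n := by rw [← one_div_pow, pow_succ]; ring


lemma tsum_digits_cons {q : ℝ} (hq : 1 < q) (d : ℕ) (hd : d ≤ 1) (b : ℕ → ℕ)
    (hb : ∀ n, b n ≤ 1) :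
    ∑' n : ℕ, (dcons d b n : ℝ) / q ^ (n + 1)
      = (d : ℝ)/q + (1/q) * ∑' n : ℕ, (b n : ℝ) / q ^ (n + 1) := by
  have hq0 : (0:ℝ) < q := lt_trans one_pos hq
  have hcd : ∀ n, dcons d b n ≤ 1 := by
    intro n; cases n with
    | zero => exact hd
    | succ k => exact hb k
  have hsum := summable_digits hq _ hcd
  rw [Summable.tsum_eq_zero_add hsum]
  have h0 : ((dcons d b 0 : ℕ) : ℝ) / q ^ (0+1) = (d:ℝ)/q := by
    simp [dcons]
  rw [h0]
  congr 1
  have : ∀ n : ℕ, ((dcons d b (n+1) : ℕ) : ℝ) / q ^ (n+1+1)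
      = (1/q) * ((b n : ℝ) / q ^ (n+1)) := by
    intro n
    show ((b n : ℕ) : ℝ) / q ^ (n+1+1) = (1/q) * ((b n : ℝ) / q ^ (n+1))
    rw [pow_succ, ← div_div]
    ring
  rw [tsum_congr this, tsum_mul_left]

lemma isExpansion_cons {q x : ℝ} (hq : 1 < q) (d : ℕ) (hd : d ≤ 1) (b : ℕ → ℕ)
    (hb : IsExpansion q (q * x - d) b) : IsExpansion q x (dcons d b) := by
  obtain ⟨hb1, hb2⟩ := hb
  have hq0 : (0:ℝ) < q := lt_trans one_pos hq
  constructor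
  · intro n; cases n with
    | zero => exact hd
    | succ k => exact hb1 k
  · rw [tsum_digits_cons hq d hd b hb1, ← hb2]
    field_simp
    ring

/-- the greedy state sequence -/
def gstate (q y : ℝ) : ℕ → ℝ
  | 0 => y
  | n+1 => if 1 ≤ q * gstate q y n then q * gstate q y n - 1 else q * gstate q y n

/-- the greedy digit sequence -/
def gdig (q y : ℝ) (n : ℕ) : ℕ := if 1 ≤ q * gstate q y n then 1 else 0

lemma gstate_succ (q y : ℝ) (n : ℕ) :
    gstate q y (n+1) = q * gstate q y n - (gdig q y n : ℝ) := by
  rw [gstate, gdig]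
  split_ifs with h <;> simp

lemma gdig_le_one (q y : ℝ) (n : ℕ) : gdig q y n ≤ 1 := by
  rw [gdig]; split_ifs <;> simp

lemma gstate_mem {q y : ℝ} (hq1 : 1 < q) (hq2 : q < 2) (hy0 : 0 ≤ y)
    (hy1 : y ≤ 1/(q-1)) (n : ℕ) : 0 ≤ gstate q y n ∧ gstate q y n ≤ 1/(q-1) := by
  have hq0 : (0:ℝ) < q := lt_trans one_pos hq1
  have hqm1 : (0:ℝ) < q - 1 := by linarith
  have hR1 : (1:ℝ) ≤ 1/(q-1) := by
    rw [le_div_iff₀ hqm1]; linarith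
  induction n with
  | zero => exact ⟨hy0, hy1⟩
  | succ k ih =>
    obtain ⟨ih0, ih1⟩ := ih
    rw [gstate]
    split_ifs with h
    · constructor
      · linarith
      · have : q * gstate q y k ≤ q * (1/(q-1)) := by
          apply mul_le_mul_of_nonneg_left ih1 (le_of_lt hq0)
        have hqR : q * (1/(q-1)) = 1/(q-1) + 1 := by field_simp; ring
        linarith
    · push_neg at h
      exact ⟨mul_nonneg (le_of_lt hq0) ih0, by linarith⟩

lemma exists_expansion {q y : ℝ} (hq1 : 1 < q) (hq2 : q < 2) (hy0 : 0 ≤ y)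
    (hy1 : y ≤ 1/(q-1)) : IsExpansion q y (gdig q y) := by
  have hq0 : (0:ℝ) < q := lt_trans one_pos hq1
  refine ⟨gdig_le_one q y, ?_⟩
  have hsum := summable_digits hq1 _ (gdig_le_one q y)
  -- partial sums
  have hpart : ∀ n : ℕ, ∑ i ∈ Finset.range n, (gdig q y i : ℝ) / q ^ (i+1)
      = y - gstate q y n / q ^ n := by
    intro n
    induction n with
    | zero => simp [gstate]
    | succ k ih =>
      rw [Finset.sum_range_succ, ih, gstate_succ]
      have hpk : (0:ℝ) < q ^ k := by positivity
      field_simp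
      ring
  have htend : Tendsto (fun n => gstate q y n / q ^ n) atTop (nhds 0) := by
    have h1q : (0:ℝ) ≤ 1/q := by positivity
    have h1q' : 1/q < 1 := by rw [div_lt_one hq0]; exact hq1
    apply squeeze_zero (f := fun n => gstate q y n / q ^ n)
        (g := fun n => (1/(q-1)) * (1/q)^n)
    · intro n
      have := (gstate_mem hq1 hq2 hy0 hy1 n).1
      positivity
    · intro n
      have h := (gstate_mem hq1 hq2 hy0 hy1 n).2
      have : gstate q y n / q ^ n ≤ (1/(q-1)) / q ^ n := by gcongr
      calc gstate q y n / q ^ n ≤ (1/(q-1)) / q ^ n := this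
        _ = (1/(q-1)) * (1/q)^n := by rw [one_div_pow]; ring
    · simpa using (tendsto_pow_atTop_nhds_zero_of_lt_one h1q h1q').const_mul (1/(q-1))
  have : Tendsto (fun n => ∑ i ∈ Finset.range n, (gdig q y i : ℝ) / q ^ (i+1)) atTop (nhds y) := by
    simp_rw [hpart]
    simpa using tendsto_const_nhds.sub htend
  exact ((hsum.hasSum_iff_tendsto_nat).2 this).tsum_eq.symm


/-- validity of a digit word from a starting point -/
def Valid (q : ℝ) : ℝ → List ℕ → Prop
  | _, [] => True
  | x, d :: t => d ≤ 1 ∧ 0 ≤ q*x - d ∧ q*x - d ≤ 1/(q-1) ∧ Valid q (q*x - d) t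

/-- endpoint of a digit word -/
def endp (q : ℝ) : ℝ → List ℕ → ℝ
  | x, [] => x
  | x, d :: t => endp q (q*x - d) t

lemma valid_append {q : ℝ} : ∀ (w1 w2 : List ℕ) (x : ℝ),
    Valid q x w1 → Valid q (endp q x w1) w2 → Valid q x (w1 ++ w2)
  | [], w2, x, _, h2 => h2
  | d :: t, w2, x, h1, h2 => by
    obtain ⟨ha, hb, hc, hd⟩ := h1
    exact ⟨ha, hb, hc, valid_append t w2 _ hd h2⟩

lemma endp_append {q : ℝ} : ∀ (w1 w2 : List ℕ) (x : ℝ),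
    endp q x (w1 ++ w2) = endp q (endp q x w1) w2
  | [], w2, x => rfl
  | d :: t, w2, x => endp_append t w2 _

lemma isExpansion_appS {q : ℝ} (hq : 1 < q) : ∀ (w : List ℕ) (x : ℝ) (b : ℕ → ℕ),
    Valid q x w → IsExpansion q (endp q x w) b → IsExpansion q x (appS w b)
  | [], x, b, _, h2 => h2
  | d :: t, x, b, h1, h2 => by
    obtain ⟨ha, hb, hc, hd⟩ := h1
    exact isExpansion_cons hq d ha _ (isExpansion_appS hq t _ b hd h2)

/-- a valid orbit from `y` reaches the switch region `J` -/
inductive ReachJ (q : ℝ) : ℝ → Prop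
  | base (y : ℝ) : 1/q ≤ y → y ≤ 1/(q*(q-1)) → ReachJ q y
  | step (y : ℝ) (d : ℕ) : d ≤ 1 → 0 ≤ q*y - d → q*y - d ≤ 1/(q-1) →
      ReachJ q (q*y - d) → ReachJ q y

lemma reach_word {q y : ℝ} (h : ReachJ q y) :
    ∃ w : List ℕ, Valid q y w ∧
      1/q ≤ endp q y w ∧ endp q y w ≤ 1/(q*(q-1)) := by
  induction h with
  | base z h1 h2 => exact ⟨[], trivial, h1, h2⟩
  | step z d hd h0 h1 _ ih =>
    obtain ⟨w, hw, he1, he2⟩ := ih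
    exact ⟨d :: w, ⟨hd, h0, h1, hw⟩, he1, he2⟩


/-- standing numeric hypotheses on the base `q` -/
structure Good (q : ℝ) : Prop where
  h1 : (1.61:ℝ) < q
  h2 : q < 1.76
  hG : q + 1 < q * q
  hf : q^3 < 2*q^2 - q + 1
  hne : q^4 ≠ 2*q^2 + q + 1

namespace Good

variable {q : ℝ}

lemma hq1 (h : Good q) : 1 < q := by linarith [h.h1]
lemma hq0 (h : Good q) : 0 < q := by linarith [h.h1]
lemma hqne (h : Good q) : q ≠ 0 := ne_of_gt h.hq0
lemma hlt2 (h : Good q) : q < 2 := by linarith [h.h2]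
lemma hm1 (h : Good q) : 0 < q - 1 := by linarith [h.h1]
lemma hm1ne (h : Good q) : q - 1 ≠ 0 := ne_of_gt h.hm1
lemma hsq (h : Good q) : 0 < q^2 - 1 := by nlinarith [h.h1]
lemma hsqne (h : Good q) : q^2 - 1 ≠ 0 := ne_of_gt h.hsq
lemma hqq1 (h : Good q) : 0 < q * (q - 1) := mul_pos h.hq0 h.hm1

lemma one_lt_R (h : Good q) : 1 < 1/(q-1) := by
  rw [lt_div_iff₀ h.hm1]; linarith [h.hlt2]

lemma m_pos (h : Good q) : 0 < 1/q := one_div_pos.mpr h.hq0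

lemma m_lt_M (h : Good q) : 1/q < 1/(q*(q-1)) := by
  rw [div_lt_div_iff₀ h.hq0 h.hqq1]; nlinarith [h.hq0, h.hlt2]

lemma M_lt_R (h : Good q) : 1/(q*(q-1)) < 1/(q-1) := by
  rw [div_lt_div_iff₀ h.hqq1 h.hm1]; nlinarith [h.hm1, h.hq1]

lemma qm_eq (h : Good q) : q * (1/q) = 1 := by
  have := h.hqne; field_simp

lemma qM_eq (h : Good q) : q * (1/(q*(q-1))) = 1/(q-1) := by
  have := h.hqne; have := h.hm1ne; field_simp

lemma qR_eq (h : Good q) : q * (1/(q-1)) = 1/(q-1) + 1 := by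
  have := h.hm1ne; field_simp; ring

lemma Rm1_eq (h : Good q) : 1/(q-1) - 1 = (2-q)/(q-1) := by
  have := h.hm1ne; field_simp; ring

lemma Rm1_pos (h : Good q) : 0 < 1/(q-1) - 1 := by linarith [h.one_lt_R]

lemma Rm1_lt_m (h : Good q) : 1/(q-1) - 1 < 1/q := by
  rw [h.Rm1_eq, div_lt_div_iff₀ h.hm1 h.hq0]
  nlinarith [h.hG]

lemma q_Rm1_gt_m (h : Good q) : 1/q < q * (1/(q-1) - 1) := by
  rw [h.Rm1_eq, mul_div_assoc', div_lt_div_iff₀ h.hq0 h.hm1]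
  nlinarith [h.hf]

lemma qm1_lt_M (h : Good q) : q - 1 < 1/(q*(q-1)) := by
  rw [lt_div_iff₀ h.hqq1]
  nlinarith [h.hf]

lemma xo_fix (h : Good q) : q^2 * (1/(q^2-1)) - 1 = 1/(q^2-1) := by
  have := h.hsqne; field_simp; ring

lemma xo_lt_m (h : Good q) : 1/(q^2-1) < 1/q := by
  rw [div_lt_div_iff₀ h.hsq h.hq0]; nlinarith [h.hG]

lemma Rm1_lt_xo (h : Good q) : 1/(q-1) - 1 < 1/(q^2-1) := by
  rw [h.Rm1_eq, div_lt_div_iff₀ h.hm1 h.hsq]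
  nlinarith [h.hG, h.hm1]

lemma m_lt_x10 (h : Good q) : 1/q < q * (1/(q^2-1)) := by
  rw [mul_one_div, div_lt_div_iff₀ h.hq0 h.hsq]
  nlinarith [h.hq0]

lemma P1 (h : Good q) : q^3 + 1 < q^2 + 2*q := by
  nlinarith [h.hf, h.hq1, h.hlt2]

lemma sq2 (h : Good q) : 2 < q*q := by nlinarith [h.h1]

lemma L9a (h : Good q) : 2*q^3 + 2*q + 1 < 5*q^2 := by
  nlinarith [mul_nonneg (le_of_lt (sub_pos.2 h.h1)) (le_of_lt (sub_pos.2 h.h2)),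
    sq_nonneg (q - 1.7), h.h1, h.h2]

lemma P2 (h : Good q) : 2 < 2*q^2 + q^3 - q^4 := by
  nlinarith [mul_pos h.hm1 (sub_pos.2 h.hf), h.L9a]

lemma c_pos (h : Good q) : 0 < 2 + q - q^2 := by nlinarith [h.hlt2, h.hq1]

lemma c_lt_one (h : Good q) : 2 + q - q^2 < 1 := by nlinarith [h.hG]

lemma cube_pos (h : Good q) : 0 < q^3 + q^2 - q - 1 := by
  nlinarith [h.hq1, sq_nonneg (q+1)]

lemma L11 (h : Good q) : q^4 + q < (2 + q - q^2) * q^5 := by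
  nlinarith [mul_pos (mul_pos h.hq0 (sub_pos.2 h.hf)) h.cube_pos]

end Good

section Dyn

variable {q : ℝ}

lemma reflect (h : Good q) {y : ℝ} (hr : ReachJ q y) : ReachJ q (1/(q-1) - y) := by
  have hRM : 1/(q-1) - 1/(q*(q-1)) = 1/q := by
    have := h.hqne; have := h.hm1ne; field_simp
  induction hr with
  | base z h1 h2 =>
    exact ReachJ.base _ (by linarith) (by linarith)
  | step z d hd h0 h1 _ ih =>
    push_cast at h0 h1
    interval_cases d
    · -- d = 0 : use digit 1
      push_cast at h0 h1
      refine ReachJ.step _ 1 le_rfl ?_ ?_ ?_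
      · push_cast
        nlinarith [h.qR_eq, h1]
      · push_cast
        nlinarith [h.qR_eq, h0, h.one_lt_R]
      · have e : q * (1/(q-1) - z) - ((1:ℕ):ℝ) = 1/(q-1) - (q*z - ((0:ℕ):ℝ)) := by
          push_cast
          nlinarith [h.qR_eq]
        rw [e]; exact ih
    · -- d = 1 : use digit 0
      push_cast at h0 h1
      refine ReachJ.step _ 0 (by norm_num) ?_ ?_ ?_
      · push_cast
        nlinarith [h.qR_eq, h1]
      · push_cast
        nlinarith [h.qR_eq, h0]
      · have e : q * (1/(q-1) - z) - ((0:ℕ):ℝ) = 1/(q-1) - (q*z - ((1:ℕ):ℝ)) := by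
          push_cast
          nlinarith [h.qR_eq]
        rw [e]; exact ih

lemma windowReach (h : Good q) : ∀ n : ℕ, ∀ y : ℝ,
    1/(q-1) - 1 ≤ y → y < 1/q →
    max (1/q - 1/(q^2-1)) (1/(q^2-1) - (1/(q-1) - 1)) < q^(2*n) * |y - 1/(q^2-1)| →
    ReachJ q y := by
  intro n
  induction n with
  | zero =>
    intro y hy1 hy2 hB
    exfalso
    rw [pow_zero, one_mul] at hB
    rcases le_total (1/(q^2-1)) y with hc | hc
    · rw [abs_of_nonneg (by linarith)] at hB
      have := le_max_left (1/q - 1/(q^2-1)) (1/(q^2-1) - (1/(q-1) - 1))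
      linarith
    · rw [abs_of_nonpos (by linarith)] at hB
      have := le_max_right (1/q - 1/(q^2-1)) (1/(q^2-1) - (1/(q-1) - 1))
      linarith
  | succ n ih =>
    intro y hy1 hy2 hB
    have hq0 := h.hq0
    have hz_gt_m : 1/q < q*y := by
      have h1 : q * (1/(q-1) - 1) ≤ q*y := by
        apply mul_le_mul_of_nonneg_left hy1 (le_of_lt hq0)
      linarith [h.q_Rm1_gt_m]
    have hz_lt1 : q*y < 1 := by
      have := mul_lt_mul_of_pos_left hy2 hq0
      rwa [h.qm_eq] at this
    have hz_le_R : q*y ≤ 1/(q-1) := by linarith [h.one_lt_R]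
    by_cases hzM : q*y ≤ 1/(q*(q-1))
    · -- lands in J
      refine ReachJ.step _ 0 (by norm_num) ?_ ?_ (ReachJ.base _ ?_ ?_)
      all_goals push_cast
      · linarith [h.m_pos]
      · linarith
      · linarith
      · linarith
    · push_neg at hzM
      have hy'1 : 1/(q-1) - 1 < q*(q*y) - 1 := by
        have := mul_lt_mul_of_pos_left hzM hq0
        rw [h.qM_eq] at this
        linarith
      have hy'2 : q*(q*y) - 1 < q - 1 := by
        nlinarith [hz_lt1, hq0]
      have hy'0 : 0 ≤ q*(q*y) - 1 := by linarith [h.Rm1_pos]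
      have hy'R : q*(q*y) - 1 ≤ 1/(q-1) := by
        linarith [h.qm1_lt_M, h.M_lt_R]
      by_cases hy'm : q*(q*y) - 1 < 1/q
      · -- back in the window, apply IH
        have hfix : q*(q*y) - 1 - 1/(q^2-1) = q^2 * (y - 1/(q^2-1)) := by
          have := h.xo_fix
          nlinarith [h.xo_fix]
        have habs : |q*(q*y) - 1 - 1/(q^2-1)| = q^2 * |y - 1/(q^2-1)| := by
          rw [hfix, abs_mul, abs_of_pos (by positivity)]
        have hBB : max (1/q - 1/(q^2-1)) (1/(q^2-1) - (1/(q-1) - 1))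
            < q^(2*n) * |q*(q*y) - 1 - 1/(q^2-1)| := by
          rw [habs]
          have e : q^(2*n) * (q^2 * |y - 1/(q^2-1)|) = q^(2*(n+1)) * |y - 1/(q^2-1)| := by
            rw [show 2*(n+1) = 2*n + 2 by ring, pow_add]
            ring
          rw [e]; exact hB
        have hr := ih _ (le_of_lt hy'1) hy'm hBB
        refine ReachJ.step _ 0 (by norm_num) (by push_cast; linarith [h.m_pos]) (by push_cast; linarith) ?_
        push_cast
        rw [sub_zero]
        exact ReachJ.step _ 1 le_rfl (by push_cast; linarith) (by push_cast; linarith) (by push_cast; exact hr)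
      · -- lands in J after two steps
        push_neg at hy'm
        refine ReachJ.step _ 0 (by norm_num) (by push_cast; linarith [h.m_pos]) (by push_cast; linarith) ?_
        push_cast
        rw [sub_zero]
        refine ReachJ.step _ 1 le_rfl (by push_cast; linarith) (by push_cast; linarith) ?_
        push_cast
        exact ReachJ.base _ hy'm (by linarith [h.qm1_lt_M])

lemma windowReach' (h : Good q) (y : ℝ) (hy1 : 1/(q-1) - 1 ≤ y) (hy2 : y < 1/q)
    (hne : y ≠ 1/(q^2-1)) : ReachJ q y := by
  have habs : 0 < |y - 1/(q^2-1)| := abs_pos.mpr (sub_ne_zero.mpr hne)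
  have hq2 : 1 < q^2 := by nlinarith [h.hq1]
  obtain ⟨n, hn⟩ := pow_unbounded_of_one_lt
    ((max (1/q - 1/(q^2-1)) (1/(q^2-1) - (1/(q-1) - 1))) / |y - 1/(q^2-1)|) hq2
  apply windowReach h n y hy1 hy2
  rw [pow_mul]
  rw [div_lt_iff₀ habs] at hn
  linarith

lemma smallReach (h : Good q) : ∀ N : ℕ, ∀ y : ℝ, 0 < y → y < 1/q →
    1/q ≤ q^N * y → (∀ k : ℕ, q^k * y ≠ q * (1/(q^2-1))) → ReachJ q y := by
  intro N
  induction N with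
  | zero =>
    intro y hy0 hym hN _
    rw [pow_zero, one_mul] at hN
    linarith
  | succ N ih =>
    intro y hy0 hym hN hk
    have hq0 := h.hq0
    by_cases hqy : q*y < 1/q
    · have hr : ReachJ q (q*y) := by
        apply ih (q*y) (by positivity) hqy
        · rw [show q^N * (q*y) = q^(N+1) * y by rw [pow_succ]; ring]
          exact hN
        · intro k
          rw [show q^k * (q*y) = q^(k+1) * y by rw [pow_succ]; ring]
          exact hk (k+1)
      refine ReachJ.step _ 0 (by norm_num) (by push_cast; rw [sub_zero]; exact le_of_lt (by positivity)) ?_ ?_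
      · push_cast; rw [sub_zero]; linarith [h.Rm1_lt_m, h.Rm1_pos, h.m_lt_M, h.M_lt_R]
      · push_cast; rw [sub_zero]; exact hr
    · push_neg at hqy
      have hz_lt1 : q*y < 1 := by
        have := mul_lt_mul_of_pos_left hym hq0
        rwa [h.qm_eq] at this
      by_cases hzM : q*y ≤ 1/(q*(q-1))
      · refine ReachJ.step _ 0 (by norm_num) (by push_cast; rw [sub_zero]; exact le_of_lt (by positivity)) ?_ (ReachJ.base _ ?_ ?_)
        all_goals push_cast
        · rw [sub_zero]; linarith [h.one_lt_R]
        · rw [sub_zero]; exact hqy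
        · rw [sub_zero]; exact hzM
      · push_neg at hzM
        have hy'1 : 1/(q-1) - 1 < q*(q*y) - 1 := by
          have := mul_lt_mul_of_pos_left hzM hq0
          rw [h.qM_eq] at this
          linarith
        have hy'2 : q*(q*y) - 1 < q - 1 := by nlinarith [hz_lt1, hq0]
        have hy'0 : 0 ≤ q*(q*y) - 1 := by linarith [h.Rm1_pos]
        have hy'R : q*(q*y) - 1 ≤ 1/(q-1) := by linarith [h.qm1_lt_M, h.M_lt_R]
        have hrest : ReachJ q (q*(q*y) - 1) := by
          by_cases hy'm : q*(q*y) - 1 < 1/q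
          · apply windowReach' h _ (le_of_lt hy'1) hy'm
            intro heq
            apply hk 1
            rw [pow_one]
            have : q*(q*y) = q^2 * y := by ring
            nlinarith [h.xo_fix, heq, h.hsq]
          · push_neg at hy'm
            exact ReachJ.base _ hy'm (by linarith [h.qm1_lt_M])
        refine ReachJ.step _ 0 (by norm_num) (by push_cast; rw [sub_zero]; exact le_of_lt (by positivity)) (by push_cast; rw [sub_zero]; linarith [h.one_lt_R]) ?_
        push_cast
        rw [sub_zero]
        exact ReachJ.step _ 1 le_rfl (by push_cast; linarith) (by push_cast; linarith) (by push_cast; exact hrest)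


lemma LD1 (h : Good q) (j : ℕ) : q^j * (1/(q-1) - 1) ≠ q * (1/(q^2-1)) := by
  have hq0 := h.hq0
  have hRm1 := h.Rm1_pos
  match j with
  | 0 =>
    rw [pow_zero, one_mul]
    exact ne_of_lt (lt_trans h.Rm1_lt_m h.m_lt_x10)
  | 1 =>
    rw [pow_one]
    exact ne_of_lt (mul_lt_mul_of_pos_left h.Rm1_lt_xo hq0)
  | (j+2) =>
    -- q^(j+2) * (R-1) ≥ q^2 * (R-1) > q * x10
    have key : q * (1/(q^2-1)) < q^2 * (1/(q-1) - 1) := by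
      rw [h.Rm1_eq, mul_one_div,
        show q^2 * ((2-q)/(q-1)) = (q^2*(2-q))/(q-1) from (mul_div_assoc _ _ _).symm,
        div_lt_div_iff₀ h.hsq h.hm1]
      nlinarith [mul_pos h.hqq1 (show (0:ℝ) < q^2 + 2*q - q^3 - 1 by nlinarith [h.P1])]
    have hmono : q^2 * (1/(q-1) - 1) ≤ q^(j+2) * (1/(q-1) - 1) := by
      apply mul_le_mul_of_nonneg_right _ (le_of_lt hRm1)
      exact pow_le_pow_right₀ (le_of_lt h.hq1) (by omega)
    exact (ne_of_lt (lt_of_lt_of_le key hmono)).symm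

/-- core of the Diophantine exclusion, assuming `K ≤ J` -/
lemma LD2' (h : Good q) (K J : ℕ) (hKJ : K ≤ J) :
    q^J + q^K ≠ (2 + q - q^2) * (q^K * q^J) := by
  have hq0 := h.hq0
  have hq1 := h.hq1
  have hpJ : (0:ℝ) < q^J := pow_pos hq0 J
  have hpK : (0:ℝ) < q^K := pow_pos hq0 K
  match K, hKJ with
  | 0, _ =>
    rw [pow_zero, one_mul]
    have : (2 + q - q^2) * q^J < q^J := by
      nlinarith [h.c_lt_one, hpJ]
    intro heq; linarith
  | 1, hKJ =>
    match J, hKJ with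
    | 1, _ =>
      rw [pow_one]
      intro heq
      nlinarith [mul_pos hq0 (mul_pos h.hm1 (sub_pos.2 h.sq2)), heq]
    | 2, _ =>
      intro heq
      have hfac : 0 < (q*q - q - 1) * (q^2 - 1) := mul_pos (by nlinarith [h.hG]) h.hsq
      nlinarith [heq, hfac, hq0]
    | 3, _ =>
      intro heq
      apply h.hne
      have h1 : q * ((q-1) * (q^4 - 2*q^2 - q - 1)) = 0 := by linear_combination heq
      rcases mul_eq_zero.mp h1 with hc | h2
      · exact absurd hc h.hqne
      rcases mul_eq_zero.mp h2 with hc | h3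
      · exact absurd hc h.hm1ne
      · linarith [sub_eq_zero.mp h3]
    | (t+4), _ =>
      intro heq
      have hQ : (1:ℝ) ≤ q^t := one_le_pow₀ (le_of_lt hq1)
      have hQ0 : (0:ℝ) < q^t := pow_pos hq0 t
      have hL11 : 0 < (2 + q - q^2) * q^5 - q^4 - q := by linarith [h.L11]
      have hexp : q^(t+4) = q^t * q^4 := pow_add q t 4
      have hexp2 : q^1 * q^(t+4) = q^t * q^5 := by
        rw [pow_one, hexp]; ring
      rw [pow_one] at heq
      rw [hexp] at heq
      -- heq : q^t * q^4 + q = (2+q-q^2) * (q * (q^t * q^4))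
      nlinarith [mul_nonneg (sub_nonneg.mpr hQ) (le_of_lt hL11), hL11, hq0, hQ,
        mul_pos hQ0 hL11]
  | (s+2), hKJ =>
    intro heq
    -- K = s+2 ≤ J
    have hKle : q^(s+2) ≤ q^J := pow_le_pow_right₀ (le_of_lt hq1) hKJ
    have hc2 : 2 < (2 + q - q^2) * q^2 := by nlinarith [h.P2]
    have hs1 : (1:ℝ) ≤ q^s := one_le_pow₀ (le_of_lt hq1)
    have hexp : q^(s+2) = q^s * q^2 := pow_add q s 2
    have hchain : (2 + q - q^2) * (q^(s+2) * q^J) ≥ ((2 + q - q^2) * q^2) * q^J := by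
      rw [hexp]
      have hcp := h.c_pos
      have h2 : (0:ℝ) < q^2 := by positivity
      nlinarith [mul_pos (mul_pos hcp h2) hpJ, mul_nonneg (mul_nonneg (le_of_lt hcp) (le_of_lt h2)) (mul_nonneg (le_of_lt hpJ) (sub_nonneg.mpr hs1))]
    nlinarith [hchain, hc2, hpJ, hKle, heq]

lemma LD2 (h : Good q) (K J : ℕ) : q^J + q^K ≠ (2 + q - q^2) * (q^K * q^J) := by
  rcases le_total K J with hle | hle
  · exact LD2' h K J hle
  · intro heq
    apply LD2' h J K hle
    calc q^K + q^J = q^J + q^K := by ring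
      _ = (2 + q - q^2) * (q^K * q^J) := heq
      _ = (2 + q - q^2) * (q^J * q^K) := by ring

/-- the branching lemma: from any point of `J`, at least one of the two digits
leads to an orbit returning to `J`. -/
lemma branch (h : Good q) (x : ℝ) (hx1 : 1/q ≤ x) (hx2 : x ≤ 1/(q*(q-1))) :
    ReachJ q (q*x) ∨ ReachJ q (q*x - 1) := by
  by_contra hcon
  push_neg at hcon
  obtain ⟨hr0, hr1⟩ := hcon
  have hq0 := h.hq0
  have hqx1 : 1 ≤ q*x := by
    calc (1:ℝ) = q * (1/q) := (h.qm_eq).symm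
    _ ≤ q*x := mul_le_mul_of_nonneg_left hx1 (le_of_lt hq0)
  have hqxR : q*x ≤ 1/(q-1) := by
    calc q*x ≤ q * (1/(q*(q-1))) := mul_le_mul_of_nonneg_left hx2 (le_of_lt hq0)
    _ = 1/(q-1) := h.qM_eq
  -- the two candidate points
  set y1 := q*x - 1 with hy1def
  set u := 1/(q-1) - q*x with hudef
  have hy1nn : 0 ≤ y1 := by simp only [hy1def]; linarith
  have hy1R : y1 ≤ 1/(q-1) - 1 := by simp only [hy1def]; linarith
  have hunn : 0 ≤ u := by simp only [hudef]; linarith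
  have huR : u ≤ 1/(q-1) - 1 := by simp only [hudef]; linarith
  have hy1u : y1 + u = 1/(q-1) - 1 := by simp only [hy1def, hudef]; ring
  have hru : ¬ ReachJ q u := by
    intro hr
    apply hr0
    have := reflect h hr
    have e : 1/(q-1) - u = q*x := by simp only [hudef]; ring
    rwa [e] at this
  -- classification of non-reaching small points
  have classify : ∀ z : ℝ, 0 ≤ z → z ≤ 1/(q-1) - 1 → ¬ ReachJ q z →
      z = 0 ∨ ∃ k : ℕ, q^k * z = q * (1/(q^2-1)) := by
    intro z hz0 hzR hnr
    by_cases hz : z = 0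
    · exact Or.inl hz
    right
    by_contra hk
    push_neg at hk
    apply hnr
    have hzpos : 0 < z := lt_of_le_of_ne hz0 (Ne.symm hz)
    have hzm : z < 1/q := lt_of_le_of_lt hzR h.Rm1_lt_m
    obtain ⟨N, hN⟩ := pow_unbounded_of_one_lt ((1/q)/z) h.hq1
    apply smallReach h N z hzpos hzm _ hk
    rw [div_lt_iff₀ hzpos] at hN
    linarith
  rcases classify y1 hy1nn hy1R hr1 with hc1 | ⟨k, hc1⟩
  · rcases classify u hunn huR hru with hc2 | ⟨j, hc2⟩
    · -- y1 = 0 and u = 0 : impossible since R > 1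
      rw [hc1, hc2] at hy1u
      have := h.one_lt_R
      linarith
    · -- u = R - 1
      have : u = 1/(q-1) - 1 := by rw [hc1] at hy1u; linarith
      rw [this] at hc2
      exact LD1 h j hc2
  · rcases classify u hunn huR hru with hc2 | ⟨j, hc2⟩
    · have : y1 = 1/(q-1) - 1 := by rw [hc2] at hy1u; linarith
      rw [this] at hc1
      exact LD1 h k hc1
    · -- both nontrivial : k, j ≥ 1 and the LD2 equation holds
      have hy1m : y1 < 1/q := lt_of_le_of_lt hy1R h.Rm1_lt_m
      have hum : u < 1/q := lt_of_le_of_lt huR h.Rm1_lt_m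
      have hk1 : k ≠ 0 := by
        intro h0
        rw [h0, pow_zero, one_mul] at hc1
        have := h.m_lt_x10
        linarith
      have hj1 : j ≠ 0 := by
        intro h0
        rw [h0, pow_zero, one_mul] at hc2
        have := h.m_lt_x10
        linarith
      obtain ⟨k', rfl⟩ := Nat.exists_eq_succ_of_ne_zero hk1
      obtain ⟨j', rfl⟩ := Nat.exists_eq_succ_of_ne_zero hj1
      -- from q^(k'+1) y1 = q xo we get q^k' * y1 = xo
      have hA : q^k' * y1 = 1/(q^2-1) := by
        have : q * (q^k' * y1) = q * (1/(q^2-1)) := by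
          rw [← hc1, pow_succ]; ring
        exact mul_left_cancel₀ h.hqne this
      have hB : q^j' * u = 1/(q^2-1) := by
        have : q * (q^j' * u) = q * (1/(q^2-1)) := by
          rw [← hc2, pow_succ]; ring
        exact mul_left_cancel₀ h.hqne this
      -- derive the polynomial equation
      have hpK : (0:ℝ) < q^k' := pow_pos hq0 k'
      have hpJ : (0:ℝ) < q^j' := pow_pos hq0 j'
      have e1 : (q^j' + q^k') * (1/(q^2-1)) = (q^k' * q^j') * (1/(q-1) - 1) := by
        have : (q^j' + q^k') * (1/(q^2-1)) = q^j' * (q^k' * y1) + q^k' * (q^j' * u) := by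
          rw [hA, hB]; ring
        rw [this, ← hy1u]; ring
      have e2 : (1/(q-1) - 1) * (q^2 - 1) = 2 + q - q^2 := by
        have := h.hm1ne
        field_simp
        ring
      have e3 : (1/(q^2-1)) * (q^2-1) = 1 := one_div_mul_cancel h.hsqne
      apply LD2 h k' j'
      have := congrArg (fun t => t * (q^2-1)) e1
      calc q^j' + q^k' = (q^j' + q^k') * ((1/(q^2-1)) * (q^2-1)) := by rw [e3]; ring
        _ = ((q^j' + q^k') * (1/(q^2-1))) * (q^2-1) := by ring
        _ = ((q^k' * q^j') * (1/(q-1) - 1)) * (q^2-1) := by rw [e1]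
        _ = (q^k' * q^j') * ((1/(q-1) - 1) * (q^2-1)) := by ring
        _ = (2 + q - q^2) * (q^k' * q^j') := by rw [e2]; ring


lemma key_word (h : Good q) (z : ℝ) (hz1 : 1/q ≤ z) (hz2 : z ≤ 1/(q*(q-1))) :
    ∃ w : List ℕ, (∃ d t, w = d :: t) ∧ Valid q z w ∧
      1/q ≤ endp q z w ∧ endp q z w ≤ 1/(q*(q-1)) := by
  have hq0 := h.hq0
  have hqz1 : 1 ≤ q*z := by
    calc (1:ℝ) = q*(1/q) := h.qm_eq.symm
      _ ≤ q*z := mul_le_mul_of_nonneg_left hz1 (le_of_lt hq0)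
  have hqzR : q*z ≤ 1/(q-1) := by
    calc q*z ≤ q*(1/(q*(q-1))) := mul_le_mul_of_nonneg_left hz2 (le_of_lt hq0)
      _ = 1/(q-1) := h.qM_eq
  rcases branch h z hz1 hz2 with hr | hr
  · obtain ⟨w, hw, he1, he2⟩ := reach_word hr
    have e : q*z - ((0:ℕ):ℝ) = q*z := by push_cast; ring
    refine ⟨0 :: w, ⟨0, w, rfl⟩, ⟨by norm_num, ?_, ?_, ?_⟩, ?_, ?_⟩
    · rw [e]; linarith
    · rw [e]; exact hqzR
    · rw [e]; exact hw
    · show 1/q ≤ endp q (q*z - ((0:ℕ):ℝ)) w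
      rw [e]; exact he1
    · show endp q (q*z - ((0:ℕ):ℝ)) w ≤ 1/(q*(q-1))
      rw [e]; exact he2
  · obtain ⟨w, hw, he1, he2⟩ := reach_word hr
    have e : q*z - ((1:ℕ):ℝ) = q*z - 1 := by push_cast; ring
    refine ⟨1 :: w, ⟨1, w, rfl⟩, ⟨le_rfl, ?_, ?_, ?_⟩, ?_, ?_⟩
    · rw [e]; linarith
    · rw [e]; linarith [h.one_lt_R]
    · rw [e]; exact hw
    · show 1/q ≤ endp q (q*z - ((1:ℕ):ℝ)) w
      rw [e]; exact he1
    · show endp q (q*z - ((1:ℕ):ℝ)) w ≤ 1/(q*(q-1))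
      rw [e]; exact he2

lemma main (h : Good q) (x : ℝ) (hx1 : 1/q ≤ x) (hx2 : x ≤ 1/(q*(q-1))) :
    {a : ℕ → ℕ | IsExpansion q x a}.Infinite := by
  have hq0 := h.hq0
  have hq1 := h.hq1
  have key : ∀ z : {z : ℝ // 1/q ≤ z ∧ z ≤ 1/(q*(q-1))},
      ∃ w : List ℕ, (∃ d t, w = d :: t) ∧ Valid q z.1 w ∧
      1/q ≤ endp q z.1 w ∧ endp q z.1 w ≤ 1/(q*(q-1)) :=
    fun z => key_word h z.1 z.2.1 z.2.2
  choose W hW1 hW2 hW3 hW4 using key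
  let T : {z : ℝ // 1/q ≤ z ∧ z ≤ 1/(q*(q-1))} → {z : ℝ // 1/q ≤ z ∧ z ≤ 1/(q*(q-1))} :=
    fun z => ⟨endp q z.1 (W z), hW3 z, hW4 z⟩
  let X : ℕ → {z : ℝ // 1/q ≤ z ∧ z ≤ 1/(q*(q-1))} := fun n => T^[n] ⟨x, hx1, hx2⟩
  have hXsucc : ∀ n, X (n+1) = T (X n) := by
    intro n
    show T^[n+1] _ = T (T^[n] _)
    rw [Function.iterate_succ_apply']
  let P : ℕ → List ℕ := fun n => Nat.rec [] (fun k acc => acc ++ W (X k)) n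
  have hPsucc : ∀ n, P (n+1) = P n ++ W (X n) := fun n => rfl
  have hPval : ∀ n, Valid q x (P n) ∧ endp q x (P n) = (X n).1 := by
    intro n
    induction n with
    | zero => exact ⟨trivial, rfl⟩
    | succ k ih =>
      obtain ⟨ihv, ihe⟩ := ih
      constructor
      · rw [hPsucc k]
        apply valid_append _ _ _ ihv
        rw [ihe]
        exact hW2 (X k)
      · rw [hPsucc k, endp_append, ihe, hXsucc k]
  choose D Tl hDT using fun n => hW1 (X n)
  have hDle : ∀ n, D n ≤ 1 := by
    intro n
    have hv := hW2 (X n)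
    rw [hDT n] at hv
    exact hv.1
  have hz1 : ∀ n, 1 ≤ q * (X n).1 := by
    intro n
    calc (1:ℝ) = q*(1/q) := h.qm_eq.symm
      _ ≤ q * (X n).1 := mul_le_mul_of_nonneg_left (X n).2.1 (le_of_lt hq0)
  have hzR : ∀ n, q * (X n).1 ≤ 1/(q-1) := by
    intro n
    calc q*(X n).1 ≤ q*(1/(q*(q-1))) := mul_le_mul_of_nonneg_left (X n).2.2 (le_of_lt hq0)
      _ = 1/(q-1) := h.qM_eq
  have hopp0 : ∀ n, 0 ≤ q*(X n).1 - ((1 - D n : ℕ):ℝ) := by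
    intro n
    have h1 : ((1 - D n : ℕ):ℝ) ≤ 1 := by exact_mod_cast Nat.sub_le 1 (D n)
    linarith [hz1 n]
  have hoppR : ∀ n, q*(X n).1 - ((1 - D n : ℕ):ℝ) ≤ 1/(q-1) := by
    intro n
    have h1 : (0:ℝ) ≤ ((1 - D n : ℕ):ℝ) := Nat.cast_nonneg _
    linarith [hzR n]
  let b : ℕ → (ℕ → ℕ) := fun n => gdig q (q*(X n).1 - ((1 - D n : ℕ):ℝ))
  have hb : ∀ n, IsExpansion q (q*(X n).1 - ((1 - D n : ℕ):ℝ)) (b n) :=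
    fun n => exists_expansion hq1 h.hlt2 (hopp0 n) (hoppR n)
  let A : ℕ → (ℕ → ℕ) := fun n => appS (P n) (dcons (1 - D n) (b n))
  have hA : ∀ n, IsExpansion q x (A n) := by
    intro n
    apply isExpansion_appS hq1 _ _ _ (hPval n).1
    rw [(hPval n).2]
    exact isExpansion_cons hq1 _ (Nat.sub_le 1 (D n)) _ (hb n)
  have hval_self : ∀ n, A n ((P n).length) = 1 - D n := by
    intro n
    show appS (P n) (dcons (1 - D n) (b n)) ((P n).length) = 1 - D n
    have e := appS_add (P n) (dcons (1 - D n) (b n)) 0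
    rw [Nat.add_zero] at e
    rw [e]
    rfl
  have hdecomp : ∀ i j, i < j → ∃ rest : List ℕ, P j = P i ++ (W (X i) ++ rest) := by
    intro i j hij
    induction j with
    | zero => omega
    | succ k ih =>
      have hik : i < k ∨ i = k := by omega
      rcases hik with hlt | heqq
      · obtain ⟨rest, hrest⟩ := ih hlt
        exact ⟨rest ++ W (X k), by rw [hPsucc k, hrest]; simp [List.append_assoc]⟩
      · subst heqq
        exact ⟨[], by rw [hPsucc i]; simp⟩
  have hval_other : ∀ i j, i < j → A j ((P i).length) = D i := by
    intro i j hij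
    obtain ⟨rest, hrest⟩ := hdecomp i j hij
    show appS (P j) (dcons (1 - D j) (b j)) ((P i).length) = D i
    rw [hrest, appS_append]
    have e := appS_add (P i) (appS (W (X i) ++ rest) (dcons (1 - D j) (b j))) 0
    rw [Nat.add_zero] at e
    rw [e, hDT i]
    rfl
  have hABne : ∀ i j, i < j → A i ≠ A j := by
    intro i j hlt heqq
    have h1 : A i ((P i).length) = 1 - D i := hval_self i
    have h2 : A j ((P i).length) = D i := hval_other i j hlt
    rw [heqq] at h1
    rw [h1] at h2
    have := hDle i
    omega
  have hinj : Function.Injective A := by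
    intro i j heqq
    by_contra hne
    rcases Nat.lt_or_ge i j with hlt | hge
    · exact hABne i j hlt heqq
    · exact hABne j i (by omega) heqq.symm
  exact Set.infinite_of_injective_forall_mem hinj (fun n => hA n)

end Dyn

end Stmt7Aux

theorem stmt7 (q2 qf : ℝ)
    (hq2 : q2 ∈ Set.Ioo (1:ℝ) 2) (hq2eq : q2 ^ 4 = 2 * q2 ^ 2 + q2 + 1)
    (hqf : qf ∈ Set.Ioo (1:ℝ) 2) (hqfeq : qf ^ 3 = 2 * qf ^ 2 - qf + 1)
    (q : ℝ) (hq : q ∈ Set.Ioo ((1 + Real.sqrt 5) / 2) q2 ∪ Set.Ioo q2 qf) :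
    ∀ x ∈ Set.Icc (1 / q) (1 / (q * (q - 1))), (expansionsOf q x).Infinite := by
  obtain ⟨hq2a, hq2b⟩ := hq2
  obtain ⟨hqfa, hqfb⟩ := hqf
  have hq2lo : (1.7:ℝ) < q2 := by
    by_contra hc
    push_neg at hc
    nlinarith [mul_nonneg (sub_nonneg.mpr hc) (sub_nonneg.mpr (le_of_lt hq2a)),
      sq_nonneg (q2-1), sq_nonneg (q2+1), sq_nonneg q2,
      mul_pos (lt_trans one_pos hq2a) (lt_trans one_pos hq2a)]
  have hq2hi : q2 < 1.72 := by
    by_contra hc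
    push_neg at hc
    nlinarith [sq_nonneg (q2 - 1.72), sq_nonneg (q2+1),
      mul_nonneg (sub_nonneg.mpr hc) (sub_nonneg.mpr hc)]
  have hqfhi : qf < 1.76 := by
    by_contra hc
    push_neg at hc
    nlinarith [sq_nonneg (qf - 1.76), mul_nonneg (sub_nonneg.mpr hc) (sub_nonneg.mpr hc)]
  have hgood : Stmt7Aux.Good q := by
    rcases hq with ⟨hGa, hGb⟩ | ⟨hIa, hIb⟩
    · have hs5 : (2.23:ℝ) < Real.sqrt 5 := by
        nlinarith [Real.sq_sqrt (show (0:ℝ) ≤ 5 by norm_num), Real.sqrt_nonneg 5]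
      have h161 : (1.61:ℝ) < q := by
        have : (1+2.23)/2 < (1+Real.sqrt 5)/2 := by linarith
        linarith
      refine ⟨h161, by linarith, ?_, ?_, ?_⟩
      · have h2q : Real.sqrt 5 < 2*q - 1 := by linarith
        nlinarith [Real.sq_sqrt (show (0:ℝ) ≤ 5 by norm_num), Real.sqrt_nonneg 5]
      · nlinarith [sq_nonneg (q - 0.14),
          mul_nonneg (sub_nonneg.mpr (le_of_lt (lt_trans hGb hq2hi))) (sq_nonneg (q - 0.14))]
      · intro heq
        have hbr : (0:ℝ) < q2^3 + q2^2*q + q2*q^2 + q^3 - 2*(q2+q) - 1 := by nlinarith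
        nlinarith [mul_pos (sub_pos.2 hGb) hbr]
    · have h17 : (1.7:ℝ) < q := lt_trans hq2lo hIa
      refine ⟨by linarith, by linarith, by nlinarith, ?_, ?_⟩
      · have hbr : (0:ℝ) < qf^2 + qf*q + q^2 - 2*(qf+q) + 1 := by nlinarith
        nlinarith [mul_pos (sub_pos.2 hIb) hbr]
      · intro heq
        have hbr : (0:ℝ) < q^3 + q^2*q2 + q*q2^2 + q2^3 - 2*(q+q2) - 1 := by nlinarith
        nlinarith [mul_pos (sub_pos.2 hIa) hbr]
  intro x hx
  exact Stmt7Aux.main hgood x hx.1 hx.2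
end
end

section
/- Let q > G = (1+√5)/2 and suppose x ∈ [0,1/(q-1)] has two expansions in base q of the forms (a_1,…,a_m,(01)^∞) and (b_1,…,b_k,a_1,…,a_m,(01)^∞) with a_1 ≠ b_1, such that each digit a_2,…,a_m is forced in the first expansion and each digit b_2,…,b_k is forced in the second expansion. Then the set of expansions of x in base q is countably infinite; in particular q ∈ B_{ℵ₀}. -/
set_option maxHeartbeats 1000000


noncomputable section

namespace Stmt8Aux

variable {q : ℝ}

lemma expSummable (hq1 : 1 < q) {c : ℕ → ℕ} (hc : ∀ n, c n ≤ 1) :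
    Summable (fun n => (c n : ℝ) / q ^ (n + 1)) := by
  have hq0 : (0:ℝ) < q := lt_trans one_pos hq1
  have hr0 : (0:ℝ) ≤ 1/q := by positivity
  have hr1 : 1/q < 1 := by rw [div_lt_one hq0]; exact hq1
  have hg : Summable (fun n : ℕ => (1/q)^(n+1)) :=
    ((summable_geometric_of_lt_one hr0 hr1).mul_left (1/q)).congr
      (fun n => by rw [pow_succ]; ring)
  refine Summable.of_nonneg_of_le (fun n => by positivity) (fun n => ?_) hg
  rw [div_pow, one_pow]
  gcongr
  exact_mod_cast hc n

lemma valSplit (hq1 : 1 < q) (c : ℕ → ℕ) (hc : ∀ n, c n ≤ 1) (k : ℕ) :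
    ∑' n : ℕ, (c n : ℝ) / q ^ (n + 1) =
      (∑ i ∈ Finset.range k, (c i : ℝ) / q ^ (i + 1)) +
        (1 / q ^ k) * ∑' n : ℕ, (c (n + k) : ℝ) / q ^ (n + 1) := by
  have hq0 : (0:ℝ) < q := lt_trans one_pos hq1
  have hs := expSummable hq1 hc
  rw [← Summable.sum_add_tsum_nat_add k hs]
  congr 1
  rw [← tsum_mul_left]
  apply tsum_congr
  intro n
  have h1 : q ^ (n + k + 1) = q ^ (n+1) * q ^ k := by ring
  rw [h1, ← div_div, div_eq_mul_inv ((c (n+k) : ℝ) / q^(n+1)), one_div, mul_comm]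

lemma expShift (hq1 : 1 < q) {y : ℝ} {c : ℕ → ℕ} (hc : IsExpansion q y c) :
    IsExpansion q (q * y - c 0) (fun n => c (n + 1)) := by
  obtain ⟨hd, hv⟩ := hc
  have hq0 : (0:ℝ) < q := lt_trans one_pos hq1
  refine ⟨fun n => hd _, ?_⟩
  have h := valSplit hq1 c hd 1
  rw [← hv] at h
  simp only [Finset.sum_range_one, pow_one] at h
  have hqne : q ≠ 0 := ne_of_gt hq0
  field_simp at h
  -- h should relate y, c 0 and the tsum
  nlinarith [h]

lemma digit0 (hq1 : 1 < q) {y : ℝ} {c : ℕ → ℕ} (hc : IsExpansion q y c)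
    (hy : y < 1/q) : c 0 = 0 := by
  have hq0 : (0:ℝ) < q := lt_trans one_pos hq1
  by_contra h
  have h1 : c 0 = 1 := by have := hc.1 0; omega
  have hs := expSummable hq1 hc.1
  have hle : ((c 0 : ℕ):ℝ)/q^(0+1) ≤ ∑' n : ℕ, (c n : ℝ)/q^(n+1) :=
    Summable.le_tsum hs 0 (fun j _ => by positivity)
  rw [h1, ← hc.2] at hle
  simp at hle
  rw [one_div] at hy
  linarith

lemma digit1 (hq1 : 1 < q) {y : ℝ} {c : ℕ → ℕ} (hc : IsExpansion q y c)
    (hy : 1/(q*(q-1)) < y) : c 0 = 1 := by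
  have hq0 : (0:ℝ) < q := lt_trans one_pos hq1
  by_contra h
  have h0 : c 0 = 0 := by have := hc.1 0; omega
  have hr0 : (0:ℝ) ≤ 1/q := by positivity
  have hr1 : 1/q < 1 := by rw [div_lt_one hq0]; exact hq1
  have hs1 : Summable (fun n => (c (n+1) : ℝ)/q^(n+1)) := expSummable hq1 (fun n => hc.1 _)
  have hg : Summable (fun n : ℕ => (1/q)^(n+1)) :=
    ((summable_geometric_of_lt_one hr0 hr1).mul_left (1/q)).congr
      (fun n => by rw [pow_succ]; ring)
  have hle : ∑' n : ℕ, (c (n+1) : ℝ)/q^(n+1) ≤ ∑' n : ℕ, (1/q:ℝ)^(n+1) := by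
    refine Summable.tsum_le_tsum (fun n => ?_) hs1 hg
    rw [div_pow, one_pow]
    gcongr
    exact_mod_cast hc.1 (n+1)
  have hgeo : ∑' n : ℕ, (1/q : ℝ)^(n+1) = 1/(q-1) := by
    have h1 : ∑' n : ℕ, (1/q:ℝ)^(n+1) = (1/q) * ∑' n : ℕ, (1/q:ℝ)^n := by
      rw [← tsum_mul_left]
      exact tsum_congr (fun n => by rw [pow_succ]; ring)
    rw [h1, tsum_geometric_of_lt_one hr0 hr1]
    have hq1' : q - 1 ≠ 0 := by intro hh; nlinarith
    field_simp
  have hsplit := valSplit hq1 c hc.1 1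
  rw [← hc.2] at hsplit
  simp only [Finset.sum_range_one, pow_one, h0, Nat.cast_zero, zero_div, zero_add] at hsplit
  have hb : ∑' n : ℕ, (c (n+1) : ℝ)/q^(n+1) ≤ 1/(q-1) := by rw [← hgeo]; exact hle
  have hq1'' : (0:ℝ) < q - 1 := by linarith
  have hmul : (1/q) * ∑' n : ℕ, (c (n+1) : ℝ)/q^(n+1) ≤ (1/q) * (1/(q-1)) :=
    mul_le_mul_of_nonneg_left hb (by positivity)
  have h2 : (1/q:ℝ) * (1/(q-1)) = 1/(q*(q-1)) := by field_simp
  have h3 : y ≤ 1/(q*(q-1)) := by rw [hsplit, ← h2]; exact hmul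
  linarith

lemma parityExp (hq1 : 1 < q) (hq21 : q + 1 < q^2) :
    IsExpansion q (1/(q^2-1)) (fun n => n % 2) := by
  have hq0 : (0:ℝ) < q := lt_trans one_pos hq1
  have hq2pos : (0:ℝ) < q^2 - 1 := by nlinarith
  refine ⟨fun n => by show n % 2 ≤ 1; omega, ?_⟩
  have hr0 : (0:ℝ) ≤ 1/q^2 := by positivity
  have hr1 : (1:ℝ)/q^2 < 1 := by rw [div_lt_one (by positivity)]; nlinarith
  have hse : Summable (fun kk : ℕ => ((2*kk % 2 : ℕ):ℝ)/q^(2*kk+1)) := by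
    have : (fun kk : ℕ => ((2*kk % 2 : ℕ):ℝ)/q^(2*kk+1)) = fun _ => (0:ℝ) := by
      funext kk
      simp [Nat.mul_mod_right]
    rw [this]; exact summable_zero
  have hgeo : Summable (fun kk : ℕ => ((1:ℝ)/q^2)^(kk+1)) :=
    ((summable_geometric_of_lt_one hr0 hr1).mul_left (1/q^2)).congr
      (fun n => by rw [pow_succ]; ring)
  have hoeq : (fun kk : ℕ => (((2*kk+1) % 2 : ℕ):ℝ)/q^(2*kk+1+1)) = fun kk : ℕ => ((1:ℝ)/q^2)^(kk+1) := by
    funext kk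
    have h1 : (2*kk+1) % 2 = 1 := by omega
    have h2 : ((1:ℝ)/q^2)^(kk+1) = 1/q^(2*kk+1+1) := by
      rw [div_pow, one_pow, ← pow_mul, show 2*(kk+1) = 2*kk+1+1 by ring]
    simp only [h1, h2, Nat.cast_one]
  have hso : Summable (fun kk : ℕ => (((2*kk+1) % 2 : ℕ):ℝ)/q^(2*kk+1+1)) := by
    rw [hoeq]; exact hgeo
  rw [← tsum_even_add_odd (f := fun n : ℕ => ((n % 2 : ℕ):ℝ)/q^(n+1)) hse hso]
  have hz : ∑' kk : ℕ, ((2*kk % 2 : ℕ):ℝ)/q^(2*kk+1) = 0 := by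
    have : (fun kk : ℕ => ((2*kk % 2 : ℕ):ℝ)/q^(2*kk+1)) = fun _ => (0:ℝ) := by
      funext kk; simp [Nat.mul_mod_right]
    rw [this, tsum_zero]
  rw [hz, zero_add, hoeq]
  have h3 : ∑' kk : ℕ, ((1:ℝ)/q^2)^(kk+1) = (1/q^2) * (1 - 1/q^2)⁻¹ := by
    have h1 : ∑' kk : ℕ, ((1:ℝ)/q^2)^(kk+1) = (1/q^2) * ∑' kk : ℕ, ((1:ℝ)/q^2)^kk := by
      rw [← tsum_mul_left]
      exact tsum_congr (fun n => by rw [pow_succ]; ring)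
    rw [h1, tsum_geometric_of_lt_one hr0 hr1]
  rw [h3]
  have hne : q^2 - 1 ≠ 0 := ne_of_gt hq2pos
  have hne2 : (q:ℝ)^2 ≠ 0 := by positivity
  field_simp

lemma tUnique (hq1 : 1 < q) (hq21 : q + 1 < q^2) {c : ℕ → ℕ}
    (hc : IsExpansion q (1/(q^2-1)) c) : ∀ n, c n = n % 2 := by
  have hq0 : (0:ℝ) < q := lt_trans one_pos hq1
  have hq2pos : (0:ℝ) < q^2 - 1 := by nlinarith
  have htq : (1:ℝ)/(q^2-1) < 1/q := by
    rw [div_lt_div_iff₀ hq2pos hq0]; nlinarith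
  have hsq : 1/(q*(q-1)) < q/(q^2-1) := by
    have h1 : (0:ℝ) < q*(q-1) := by nlinarith
    rw [div_lt_div_iff₀ h1 hq2pos]; nlinarith
  have hqt : q * (1/(q^2-1)) = q/(q^2-1) := by ring
  have hqs : q * (q/(q^2-1)) - 1 = 1/(q^2-1) := by
    field_simp
    ring
  have key : ∀ n, IsExpansion q (if n % 2 = 0 then 1/(q^2-1) else q/(q^2-1)) (fun i => c (i + n)) := by
    intro n
    induction n with
    | zero => simpa using hc
    | succ n ih =>
      rcases Nat.mod_two_eq_zero_or_one n with h2 | h2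
      · rw [h2] at ih
        simp only [if_pos rfl] at ih
        have hd0 : c (0 + n) = 0 := digit0 hq1 ih htq
        have hsh := expShift hq1 ih
        simp only [hd0, Nat.cast_zero, sub_zero] at hsh
        have hn1 : (n+1) % 2 = 1 := by omega
        rw [hn1]
        simp only [one_ne_zero, if_false]
        have hfun : (fun i => c (i + (n+1))) = (fun j => c (j + 1 + n)) := by
          funext i; congr 1; omega
        rw [hfun, ← hqt]
        exact hsh
      · rw [h2] at ih
        simp only [one_ne_zero, if_false] at ih
        have hd1 : c (0 + n) = 1 := digit1 hq1 ih hsq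
        have hsh := expShift hq1 ih
        simp only [hd1, Nat.cast_one] at hsh
        have hn1 : (n+1) % 2 = 0 := by omega
        rw [hn1]
        simp only [if_pos rfl]
        have hfun : (fun i => c (i + (n+1))) = (fun j => c (j + 1 + n)) := by
          funext i; congr 1; omega
        rw [hfun, ← hqs]
        exact hsh
  intro n
  have h := key n
  rcases Nat.mod_two_eq_zero_or_one n with h2 | h2 <;> rw [h2] at h <;> rw [h2]
  · simp only [if_pos rfl] at h
    have := digit0 hq1 h htq
    simpa using this
  · simp only [one_ne_zero, if_false] at h
    have := digit1 hq1 h hsq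
    simpa using this

end Stmt8Aux

namespace Stmt8Aux

def cseq (a b : ℕ → ℕ) (k j : ℕ) : ℕ → ℕ :=
  fun n => if n < j * k then b (n % k) else a (n - j * k)

def eseq (a b : ℕ → ℕ) (k : ℕ) : ℕ → ℕ → ℕ
  | 0 => fun n => b (n % k)
  | (j+1) => cseq a b k j

end Stmt8Aux

open Stmt8Aux in
theorem stmt8 (q : ℝ) (hqG : (1 + Real.sqrt 5) / 2 < q) (hq2 : q < 2)
    (x : ℝ) (hx : x ∈ Set.Icc (0:ℝ) (1 / (q - 1)))
    (m k : ℕ) (hm : 1 ≤ m) (hk : 1 ≤ k)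
    (a b : ℕ → ℕ)
    (ha : IsExpansion q x a) (hb : IsExpansion q x b)
    (hatail : ∀ n, m ≤ n → a n = (n - m) % 2)
    (hbpre : ∀ n, b (k + n) = a n)
    (hab : a 0 ≠ b 0)
    (hfa : ∀ i, 1 ≤ i → i < m → Forced q x a i)
    (hfb : ∀ i, 1 ≤ i → i < k → Forced q x b i) :
    Cardinal.mk (expansionsOf q x) = Cardinal.aleph0 ∧ q ∈ Baleph0 := by
  classical
  have h5sq : Real.sqrt 5 ^ 2 = 5 := Real.sq_sqrt (by norm_num)
  have h5n : 0 ≤ Real.sqrt 5 := Real.sqrt_nonneg 5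
  have hq1 : 1 < q := by nlinarith [sq_nonneg (Real.sqrt 5 - 2)]
  have hq21 : q + 1 < q^2 := by nlinarith [sq_nonneg (2*q - 1 - Real.sqrt 5)]
  have hq0 : (0:ℝ) < q := lt_trans one_pos hq1
  have hqk0 : (0:ℝ) < q ^ k := by positivity
  have hqm0 : (0:ℝ) < q ^ m := by positivity
  obtain ⟨haD, haV⟩ := ha
  obtain ⟨hbD, hbV⟩ := hb
  have ha' : IsExpansion q x a := ⟨haD, haV⟩
  have hb' : IsExpansion q x b := ⟨hbD, hbV⟩
  -- self-similarity : x = P_b + (1/q^k) x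
  have hPb : x = (∑ i ∈ Finset.range k, (b i:ℝ)/q^(i+1)) + (1/q^k) * x := by
    have h := valSplit hq1 b hbD k
    have h2 : (fun n : ℕ => ((b (n+k) : ℕ):ℝ)/q^(n+1)) = fun n : ℕ => ((a n : ℕ):ℝ)/q^(n+1) := by
      funext n
      rw [show n + k = k + n by ring, hbpre n]
    rw [← hbV, h2, ← haV] at h
    exact h
  -- the tail of a is the parity sequence
  have hAtail : (fun n : ℕ => ((a (n + m) : ℕ):ℝ)/q^(n+1)) = fun n : ℕ => (((n % 2 : ℕ)):ℝ)/q^(n+1) := by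
    funext n
    rw [hatail (n+m) (Nat.le_add_left m n), Nat.add_sub_cancel]
  have hparity := parityExp (q := q) hq1 hq21
  have hPa : x = (∑ i ∈ Finset.range m, (a i:ℝ)/q^(i+1)) + (1/q^m) * (1/(q^2-1)) := by
    have h := valSplit hq1 a haD m
    rw [← haV, hAtail, ← hparity.2] at h
    exact h
  -- forced prefixes
  have hprefA : ∀ c, IsExpansion q x c → c 0 = a 0 → ∀ i, i < m → c i = a i := by
    intro c hc hc0 i
    induction i using Nat.strong_induction_on with
    | _ i ih =>
      intro him
      rcases Nat.eq_zero_or_pos i with rfl | hpos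
      · exact hc0
      · exact hfa i hpos him c hc (fun j hj => ih j hj (hj.trans him))
  have hprefB : ∀ c, IsExpansion q x c → c 0 = b 0 → ∀ i, i < k → c i = b i := by
    intro c hc hc0 i
    induction i using Nat.strong_induction_on with
    | _ i ih =>
      intro him
      rcases Nat.eq_zero_or_pos i with rfl | hpos
      · exact hc0
      · exact hfb i hpos him c hc (fun j hj => ih j hj (hj.trans him))
  -- the a-branch: c must equal a
  have hdropA : ∀ c, IsExpansion q x c → c 0 = a 0 → ∀ n, c n = a n := by
    intro c hc hc0 n
    have hpre := hprefA c hc hc0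
    have hsplit := valSplit hq1 c hc.1 m
    rw [← hc.2] at hsplit
    have hsum_eq : (∑ i ∈ Finset.range m, ((c i : ℕ):ℝ)/q^(i+1))
        = ∑ i ∈ Finset.range m, ((a i : ℕ):ℝ)/q^(i+1) :=
      Finset.sum_congr rfl (fun i hi => by rw [hpre i (Finset.mem_range.1 hi)])
    rw [hsum_eq] at hsplit
    have hVc : (∑' n : ℕ, ((c (n+m) : ℕ):ℝ)/q^(n+1)) = 1/(q^2-1) := by
      have h1 : (1/q^m) * (∑' n : ℕ, ((c (n+m) : ℕ):ℝ)/q^(n+1)) = (1/q^m) * (1/(q^2-1)) := by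
        linarith [hPa, hsplit]
      exact mul_left_cancel₀ (by positivity) h1
    have hexp : IsExpansion q (1/(q^2-1)) (fun i => c (i + m)) := ⟨fun i => hc.1 _, hVc.symm⟩
    have htail := tUnique hq1 hq21 hexp
    by_cases hnm : n < m
    · exact hpre n hnm
    · have hle : m ≤ n := le_of_not_gt hnm
      have h1 := htail (n - m)
      have h2 : n - m + m = n := Nat.sub_add_cancel hle
      rw [h2] at h1
      rw [h1, hatail n hle]
  -- the b-branch
  have hdropB : ∀ c, IsExpansion q x c → c 0 = b 0 →
      (∀ i, i < k → c i = b i) ∧ IsExpansion q x (fun n => c (n + k)) := by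
    intro c hc hc0
    have hpre := hprefB c hc hc0
    refine ⟨hpre, ?_⟩
    have hsplit := valSplit hq1 c hc.1 k
    rw [← hc.2] at hsplit
    have hsum_eq : (∑ i ∈ Finset.range k, ((c i : ℕ):ℝ)/q^(i+1))
        = ∑ i ∈ Finset.range k, ((b i : ℕ):ℝ)/q^(i+1) :=
      Finset.sum_congr rfl (fun i hi => by rw [hpre i (Finset.mem_range.1 hi)])
    rw [hsum_eq] at hsplit
    have hVc : (∑' n : ℕ, ((c (n+k) : ℕ):ℝ)/q^(n+1)) = x := by
      have h1 : (1/q^k) * (∑' n : ℕ, ((c (n+k) : ℕ):ℝ)/q^(n+1)) = (1/q^k) * x := by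
        linarith [hPb, hsplit]
      exact mul_left_cancel₀ (by positivity) h1
    exact ⟨fun i => hc.1 _, hVc.symm⟩
  -- dichotomy
  have hDich : ∀ c, IsExpansion q x c →
      (∀ n, c n = a n) ∨ ((∀ i, i < k → c i = b i) ∧ IsExpansion q x (fun n => c (n + k))) := by
    intro c hc
    have h0 : c 0 = a 0 ∨ c 0 = b 0 := by
      have h1 := hc.1 0
      have h2 := haD 0
      have h3 := hbD 0
      omega
    rcases h0 with h | h
    · exact Or.inl (hdropA c hc h)
    · exact Or.inr (hdropB c hc h)
  -- prepending the b-prefix preserves being an expansion of x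
  have hPrep : ∀ d, IsExpansion q x d →
      IsExpansion q x (fun n => if n < k then b n else d (n - k)) := by
    intro d hd
    have hdig : ∀ n, (if n < k then b n else d (n - k)) ≤ 1 := by
      intro n
      by_cases h : n < k
      · simp only [if_pos h]; exact hbD n
      · simp only [if_neg h]; exact hd.1 _
    refine ⟨hdig, ?_⟩
    have hsplit := valSplit hq1 _ hdig k
    have h1 : (∑ i ∈ Finset.range k, (((if i < k then b i else d (i - k)) : ℕ):ℝ)/q^(i+1))
        = ∑ i ∈ Finset.range k, ((b i : ℕ):ℝ)/q^(i+1) :=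
      Finset.sum_congr rfl (fun i hi => by rw [if_pos (Finset.mem_range.1 hi)])
    have h2 : (fun n : ℕ => (((if n + k < k then b (n+k) else d (n + k - k)) : ℕ):ℝ)/q^(n+1))
        = fun n : ℕ => ((d n : ℕ):ℝ)/q^(n+1) := by
      funext n
      have hnk : ¬ (n + k < k) := by omega
      rw [if_neg hnk, Nat.add_sub_cancel]
    rw [hsplit, h1, h2, ← hd.2]
    exact hPb
  -- all cseq are expansions
  have hMemC : ∀ j, IsExpansion q x (cseq a b k j) := by
    intro j
    induction j with
    | zero =>
      have h : cseq a b k 0 = a := by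
        funext n
        simp [cseq]
      rw [h]; exact ha'
    | succ j ih =>
      have heq : cseq a b k (j+1) = fun n => if n < k then b n else cseq a b k j (n - k) := by
        funext n
        have e : (j+1)*k = j*k + k := by ring
        by_cases h1 : n < k
        · have h2 : n < (j+1)*k := by omega
          simp only [cseq, if_pos h1, if_pos h2, Nat.mod_eq_of_lt h1]
        · simp only [cseq, if_neg h1]
          by_cases h2 : n < (j+1)*k
          · have h3 : n - k < j*k := by omega
            rw [if_pos h2, if_pos h3]
            congr 1
            exact Nat.mod_eq_sub_mod (le_of_not_gt h1)
          · have h3 : ¬ (n - k < j*k) := by omega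
            rw [if_neg h2, if_neg h3]
            congr 1
            omega
      rw [heq]
      exact hPrep _ ih
  -- eseq 0 (the periodic sequence) is an expansion
  have hMemE : ∀ j, IsExpansion q x (eseq a b k j) := by
    intro j
    cases j with
    | succ j => exact hMemC j
    | zero =>
      refine ⟨fun n => hbD _, ?_⟩
      show x = ∑' n : ℕ, ((b (n % k) : ℕ):ℝ)/q^(n+1)
      have hdig : ∀ n, b (n % k) ≤ 1 := fun n => hbD _
      have hsplit := valSplit hq1 (fun n => b (n % k)) hdig k
      have h1 : (∑ i ∈ Finset.range k, ((b (i % k) : ℕ):ℝ)/q^(i+1))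
          = ∑ i ∈ Finset.range k, ((b i : ℕ):ℝ)/q^(i+1) :=
        Finset.sum_congr rfl (fun i hi => by rw [Nat.mod_eq_of_lt (Finset.mem_range.1 hi)])
      have h2 : (fun n : ℕ => ((b ((n + k) % k) : ℕ):ℝ)/q^(n+1))
          = fun n : ℕ => ((b (n % k) : ℕ):ℝ)/q^(n+1) := by
        funext n
        rw [Nat.add_mod_right]
      rw [h1, h2] at hsplit
      have hk1 : (1:ℝ)/q^k < 1 := by
        rw [div_lt_one hqk0]
        exact one_lt_pow₀ hq1 (by omega)
      have hzero : (1 - 1/q^k) * (x - ∑' n : ℕ, ((b (n % k) : ℕ):ℝ)/q^(n+1)) = 0 := by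
        linear_combination hPb - hsplit
      rcases mul_eq_zero.1 hzero with h | h
      · exfalso; linarith
      · linarith
  -- every expansion is one of the eseq
  have hClass : ∀ c, IsExpansion q x c → ∃ j, c = eseq a b k j := by
    intro c hc
    have iter : ∀ j, (∃ i, c = eseq a b k i) ∨
        ((∀ n, n < j*k → c n = b (n % k)) ∧ IsExpansion q x (fun n => c (n + j*k))) := by
      intro j
      induction j with
      | zero =>
        right
        constructor
        · intro n hn
          rw [Nat.zero_mul] at hn
          exact absurd hn (Nat.not_lt_zero n)
        · have h : (fun n : ℕ => c (n + 0*k)) = c := by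
            funext n
            rw [Nat.zero_mul, Nat.add_zero]
          rw [h]; exact hc
      | succ j ih =>
        rcases ih with h | ⟨hpre, hexp⟩
        · exact Or.inl h
        · have e : (j+1)*k = j*k + k := by ring
          rcases hDich _ hexp with hA | ⟨hbp, hexp'⟩
          · left
            refine ⟨j+1, ?_⟩
            funext n
            show c n = cseq a b k j n
            by_cases h1 : n < j*k
            · rw [cseq, if_pos h1]
              exact hpre n h1
            · rw [cseq, if_neg h1]
              have h2 : n - j*k + j*k = n := Nat.sub_add_cancel (le_of_not_gt h1)
              have h3 := hA (n - j*k)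
              simp only [h2] at h3
              exact h3
          · right
            constructor
            · intro n hn
              by_cases h1 : n < j*k
              · exact hpre n h1
              · have hle : j*k ≤ n := le_of_not_gt h1
                have h2 : n - j*k < k := by omega
                have h3 := hbp (n - j*k) h2
                simp only [Nat.sub_add_cancel hle] at h3
                have e2 : k*j = j*k := by ring
                have h4 : n % k = n - j*k := by
                  conv_lhs => rw [show n = k*j + (n - j*k) by omega]
                  rw [Nat.mul_add_mod, Nat.mod_eq_of_lt h2]
                rw [h3, h4]
            · have hfun : (fun n : ℕ => c (n + (j+1)*k)) = (fun n : ℕ => c (n + k + j*k)) := by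
                funext n
                congr 1
                ring
              rw [hfun]
              exact hexp'
    by_cases hex : ∃ i, c = eseq a b k i
    · exact hex
    · refine ⟨0, ?_⟩
      funext n
      rcases iter (n+1) with h | ⟨hpre, _⟩
      · exact absurd h hex
      · have hn : n < (n+1)*k := by
          have h1 : (n+1)*1 ≤ (n+1)*k := Nat.mul_le_mul le_rfl hk
          omega
        exact hpre n hn
  -- injectivity of eseq
  have ha0 : ∀ j : ℕ, cseq a b k j (j*k) = a 0 := by
    intro j
    simp [cseq]
  have hb0 : ∀ j j' : ℕ, j < j' → cseq a b k j' (j*k) = b 0 := by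
    intro j j' h
    have hlt : j*k < j'*k := by
      calc j*k < j*k + k := by omega
        _ = (j+1)*k := by ring
        _ ≤ j'*k := Nat.mul_le_mul h le_rfl
    simp [cseq, hlt, Nat.mul_mod_left]
  have hb0' : ∀ j : ℕ, eseq a b k 0 (j*k) = b 0 := by
    intro j
    show b (j*k % k) = b 0
    rw [Nat.mul_mod_left]
  have hInj : Function.Injective (eseq a b k) := by
    have key : ∀ u v : ℕ, u < v → eseq a b k u ≠ eseq a b k v := by
      intro u v huv heq
      cases u with
      | zero =>
        cases v with
        | zero => omega
        | succ v =>
          have h1 := congrFun heq (v*k)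
          have h2 : eseq a b k 0 (v*k) = b 0 := hb0' v
          have h3 : eseq a b k (v+1) (v*k) = a 0 := ha0 v
          rw [h2, h3] at h1
          exact hab h1.symm
      | succ u =>
        cases v with
        | zero => omega
        | succ v =>
          have huv' : u < v := by omega
          have h1 := congrFun heq (u*k)
          have h2 : eseq a b k (u+1) (u*k) = a 0 := ha0 u
          have h3 : eseq a b k (v+1) (u*k) = b 0 := hb0 u v huv'
          rw [h2, h3] at h1
          exact hab h1
    intro i i' h
    by_contra hne
    rcases lt_or_gt_of_ne hne with h' | h'
    · exact key _ _ h' h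
    · exact key _ _ h' h.symm
  -- conclusion
  have hSet : expansionsOf q x = Set.range (eseq a b k) := by
    ext c
    constructor
    · intro hc
      obtain ⟨j, hj⟩ := hClass c hc
      exact ⟨j, hj.symm⟩
    · rintro ⟨j, rfl⟩
      exact hMemE j
  have hcard : Cardinal.mk (expansionsOf q x) = Cardinal.aleph0 := by
    rw [hSet, Cardinal.mk_range_eq _ hInj, Cardinal.mk_nat]
  exact ⟨hcard, ⟨⟨hqG, hq2⟩, x, hx, hcard⟩⟩
end
end

section
/- Let q > G = (1+√5)/2 and m ≥ 0, and suppose x ∈ [0,1/(q-1)] has an expansion in base q beginning with the word 1(01)^m 1 (i.e., digits 1, then m copies of 01, then 1, followed by an arbitrary tail). Then the first digit 1 is forced: every expansion of x in base q has first digit 1. Equivalently, 1/q + 1/q³ + ⋯ + 1/q^{2m+1} + 1/q^{2m+2} > 1/(q(q-1)). -/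
noncomputable section

lemma aux_geom_summable (q : ℝ) (hq1 : 1 < q) :
    Summable (fun n : ℕ => (1/q) ^ (n+1)) := by
  have h : (1/q) < 1 := by
    rw [div_lt_one (by linarith)]; linarith
  have h0 : 0 ≤ 1/q := by positivity
  have := (summable_geometric_of_lt_one h0 h).mul_right (1/q)
  simpa [pow_succ] using this

lemma aux_geom_summable2 (q : ℝ) (hq1 : 1 < q) :
    Summable (fun n : ℕ => (1/q) ^ (n+2)) := by
  have h : (1/q) < 1 := by
    rw [div_lt_one (by linarith)]; linarith
  have h0 : 0 ≤ 1/q := by positivity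
  have := (summable_geometric_of_lt_one h0 h).mul_right ((1/q)^2)
  simpa [pow_add] using this

lemma aux_dig_bound (q : ℝ) (hq1 : 1 < q) (k : ℕ) (d : ℕ) (hd : d ≤ 1) :
    (d : ℝ) / q ^ k ≤ (1/q) ^ k := by
  have hq0 : (0:ℝ) < q := by linarith
  rw [one_div, inv_pow, ← one_div]
  apply div_le_div_of_nonneg_right ?_ (by positivity)
  exact_mod_cast hd

lemma aux_dig_summable (q : ℝ) (hq1 : 1 < q) (c : ℕ → ℕ) (hc : ∀ n, c n ≤ 1) :
    Summable (fun n : ℕ => (c n : ℝ) / q ^ (n+1)) := by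
  have hq0 : (0:ℝ) < q := by linarith
  exact Summable.of_nonneg_of_le (fun n => by positivity)
    (fun n => aux_dig_bound q hq1 (n+1) (c n) (hc n)) (aux_geom_summable q hq1)

lemma aux_ineq (q : ℝ) (hq1 : 1 < q) (hroot : q + 1 < q^2) (m : ℕ) :
    (∑ j ∈ Finset.range (m + 1), 1 / q ^ (2 * j + 1)) + 1 / q ^ (2 * m + 2) >
      1 / (q * (q - 1)) := by
  have hq0 : (0:ℝ) < q := by linarith
  have hq2 : (1:ℝ) < q^2 := by nlinarith
  have hne : (1/q^2 : ℝ) ≠ 1 := by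
    intro h
    rw [div_eq_one_iff_eq (by positivity)] at h
    linarith
  have hsum : ∑ j ∈ Finset.range (m + 1), 1 / q ^ (2 * j + 1)
      = (1/q) * (((1/q^2)^(m+1) - 1) / (1/q^2 - 1)) := by
    rw [← geom_sum_eq hne, Finset.mul_sum]
    apply Finset.sum_congr rfl
    intro j _
    rw [pow_add, pow_mul, pow_one, div_pow, one_pow, div_mul_div_comm, one_mul]
    ring
  have hsq : 1 / q ^ (2 * m + 2) = (1/q^2)^(m+1) := by
    rw [div_pow, one_pow, ← pow_mul]; ring_nf
  rw [hsum, hsq]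
  generalize hgen : ((1/q^2 : ℝ))^(m+1) = s
  have hs0 : (0:ℝ) < s := hgen ▸ by positivity
  have hq1' : q ≠ 0 := by positivity
  have hq2' : q^2 - 1 ≠ 0 := by nlinarith
  have hq3' : q - 1 ≠ 0 := by intro h; nlinarith
  have hne' : 1/q^2 - 1 ≠ 0 := sub_ne_zero.2 hne
  have hq4' : q - q^3 ≠ 0 := by nlinarith
  have h1 : (s - 1) / (1/q^2 - 1) = q^2 * (1 - s) / (q^2 - 1) := by
    rw [div_eq_div_iff hne' hq2']
    field_simp
    ring
  have key : (1/q) * ((s - 1) / (1/q^2 - 1)) + s - 1 / (q * (q - 1))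
      = (q^2 - q - 1) / (q^2 - 1) * (1/q + s) := by
    rw [h1]
    field_simp
    ring
  nlinarith [mul_pos (div_pos (by nlinarith : (0:ℝ) < q^2 - q - 1)
      (by nlinarith : (0:ℝ) < q^2 - 1)) (by positivity : (0:ℝ) < 1/q + s)]

lemma aux_sum_even (q : ℝ) (m : ℕ) (a : ℕ → ℕ) (h : ∀ i ≤ 2 * m, a i = (i + 1) % 2) :
    ∑ n ∈ Finset.range (2 * m + 1), (a n : ℝ) / q ^ (n + 1)
      = ∑ j ∈ Finset.range (m + 1), 1 / q ^ (2 * j + 1) := by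
  induction m with
  | zero =>
    simp [h 0 (by omega)]
  | succ m ih =>
    have e1 : 2 * (m + 1) + 1 = (2 * m + 1) + 1 + 1 := by ring
    rw [e1, Finset.sum_range_succ, Finset.sum_range_succ,
      ih (fun i hi => h i (by omega)),
      Finset.sum_range_succ (fun j => 1 / q ^ (2 * j + 1)) (m + 1)]
    have h1 : a (2 * m + 1) = 0 := by rw [h _ (by omega)]; omega
    have h2 : a (2 * m + 1 + 1) = 1 := by rw [h _ (by omega)]; omega
    rw [h1, h2]
    push_cast
    have e3 : 2 * m + 1 + 1 + 1 = 2 * (m + 1) + 1 := by ring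
    rw [e3]
    ring

theorem stmt9 (q : ℝ) (hqG : (1 + Real.sqrt 5) / 2 < q) (hq2 : q < 2)
    (m : ℕ) (x : ℝ) (a : ℕ → ℕ) (ha : IsExpansion q x a)
    (ha0 : a 0 = 1)
    (hmid : ∀ i, 1 ≤ i → i ≤ 2 * m → a i = (i + 1) % 2)
    (hend : a (2 * m + 1) = 1) :
    (∀ c, IsExpansion q x c → c 0 = 1) ∧
      (∑ j ∈ Finset.range (m + 1), 1 / q ^ (2 * j + 1)) + 1 / q ^ (2 * m + 2) >
        1 / (q * (q - 1)) := by
  have h5 : Real.sqrt 5 ^ 2 = 5 := Real.sq_sqrt (by norm_num)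
  have h5' : 2 < Real.sqrt 5 := by nlinarith [Real.sqrt_nonneg 5]
  have hq1 : 1 < q := by linarith
  have hq0 : (0:ℝ) < q := by linarith
  have hroot : q + 1 < q ^ 2 := by
    have f1 : 0 < 2*q - 1 - Real.sqrt 5 := by linarith
    have f2 : 0 < 2*q - 1 + Real.sqrt 5 := by linarith
    nlinarith [mul_pos f1 f2]
  have hineq := aux_ineq q hq1 hroot m
  refine ⟨?_, hineq⟩
  intro c hc
  by_contra h0
  have hc0 : c 0 = 0 := by have := hc.1 0; omega
  -- lower bound on x
  have hsa := aux_dig_summable q hq1 a ha.1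
  have hdig : ∀ i ≤ 2 * m, a i = (i + 1) % 2 := by
    intro i hi
    rcases Nat.eq_zero_or_pos i with h | h
    · subst h; simpa using ha0
    · exact hmid i h hi
  have heval : ∑ n ∈ Finset.range (2 * m + 2), (a n : ℝ) / q ^ (n + 1)
      = (∑ j ∈ Finset.range (m + 1), 1 / q ^ (2 * j + 1)) + 1 / q ^ (2 * m + 2) := by
    have e : 2 * m + 2 = (2 * m + 1) + 1 := rfl
    rw [e, Finset.sum_range_succ, aux_sum_even q m a hdig, hend]
    norm_num
  have hfin : ∑ n ∈ Finset.range (2 * m + 2), (a n : ℝ) / q ^ (n + 1) ≤ x := by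
    rw [ha.2]
    exact Summable.sum_le_tsum _ (fun n _ => by positivity) hsa
  have hxlow : 1 / (q * (q - 1)) < x := by
    rw [heval] at hfin; linarith
  -- upper bound on x
  have hsc := aux_dig_summable q hq1 c hc.1
  have hsc' : Summable (fun n : ℕ => (c (n+1) : ℝ) / q ^ (n + 1 + 1)) := by
    apply Summable.of_nonneg_of_le (fun n => by positivity)
      (fun n => aux_dig_bound q hq1 (n+2) (c (n+1)) (hc.1 (n+1)))
      (aux_geom_summable2 q hq1)
  have hxup : x ≤ 1 / (q * (q - 1)) := by
    rw [hc.2, Summable.tsum_eq_zero_add hsc]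
    have hz : (c 0 : ℝ) / q ^ (0 + 1) = 0 := by simp [hc0]
    rw [hz, zero_add]
    have hle : ∑' n : ℕ, (c (n+1) : ℝ) / q ^ (n + 1 + 1) ≤ ∑' n : ℕ, (1/q) ^ (n + 2) := by
      apply Summable.tsum_le_tsum _ hsc' (aux_geom_summable2 q hq1)
      intro n
      exact aux_dig_bound q hq1 (n+2) (c (n+1)) (hc.1 (n+1))
    have hval : ∑' n : ℕ, ((1:ℝ)/q) ^ (n + 2) = 1 / (q * (q - 1)) := by
      have h : (1/q : ℝ) < 1 := by rw [div_lt_one hq0]; linarith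
      have h0 : (0:ℝ) ≤ 1/q := by positivity
      have := tsum_geometric_of_lt_one h0 h
      calc ∑' n : ℕ, ((1:ℝ)/q) ^ (n + 2)
          = ∑' n : ℕ, ((1:ℝ)/q) ^ n * (1/q)^2 := by
            apply tsum_congr; intro n; rw [pow_add]
        _ = (1 - 1/q)⁻¹ * (1/q)^2 := by rw [tsum_mul_right, this]
        _ = 1 / (q * (q - 1)) := by
            rw [show ((1:ℝ) - 1/q) = (q-1)/q by field_simp, inv_div, div_pow, one_pow,
              div_mul_div_comm, mul_one,
              div_eq_div_iff (ne_of_gt (mul_pos (by linarith : (0:ℝ) < q - 1) (by positivity : (0:ℝ) < q^2)))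
                (ne_of_gt (mul_pos hq0 (by linarith : (0:ℝ) < q - 1)))]
            ring
    linarith
  linarith
end
end

section
/- Let q > q_2, where q_2 is the root in (1,2) of x⁴ = 2x² + x + 1, let m ≥ 1, and let x be the value in base q of the sequence (01)^m 1 0000 (10)^∞ (m copies of 01, then 1, then four 0s, then the periodic tail 1010…). Then the first digit 0 is forced: every expansion of x in base q has first digit 0. Equivalently, with λ = 1/q: λ² + λ⁴ + ⋯ + λ^{2m} + λ^{2m+1} + λ^{2m+6}/(1 − λ²) < λ. -/
noncomputable section

private lemma key_ineq' (l : ℝ) (h1 : 1/2 < l) (h2 : l < 10/17) (m : ℕ) (hm : 1 ≤ m) :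
    (∑ j ∈ Finset.range m, l ^ (2*(j+1))) + l^(2*m+1) + l^(2*m+6)/(1 - l^2) < l := by
  have hl0 : 0 < l := lt_trans (by norm_num) h1
  have hl1 : l < 1 := lt_trans h2 (by norm_num)
  have hd : 0 < 1 - l^2 := by nlinarith
  set u : ℝ := (l^2)^m with hu
  have hu0 : 0 < u := pow_pos (by positivity) m
  have hule : u ≤ l^2 := by
    calc u ≤ (l^2)^1 := pow_le_pow_of_le_one (by positivity) (by nlinarith) hm
    _ = l^2 := pow_one _
  have hsum : (∑ j ∈ Finset.range m, l ^ (2*(j+1))) = l^2 * (1 - u)/(1 - l^2) := by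
    have h0 : ∀ j, l ^ (2*(j+1)) = (l^2)^j * l^2 := by
      intro j; rw [← pow_mul]; ring
    rw [Finset.sum_congr rfl (fun j _ => h0 j), ← Finset.sum_mul,
      geom_sum_eq (by nlinarith : l^2 ≠ 1)]
    rw [show ((l^2)^m - 1)/(l^2-1) = (1 - u)/(1-l^2) by
      rw [hu, ← neg_div_neg_eq]
      ring_nf]
    ring
  have h21 : l^(2*m+1) = u * l := by rw [pow_add, pow_mul, pow_one]
  have h26 : l^(2*m+6) = u * l^6 := by rw [pow_add, pow_mul]
  rw [hsum, h21, h26]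
  have e : l^2*(1-u)/(1-l^2) + u*l + u*l^6/(1-l^2)
      = (l^2*(1-u) + u*l*(1-l^2) + u*l^6)/(1-l^2) := by field_simp
  rw [e, div_lt_iff₀ hd]
  have hcoef : 0 < l - l^2 - l^3 + l^6 := by
    nlinarith [sq_nonneg (l - 1/2), pow_pos hl0 6]
  have hb1 : u * (l - l^2 - l^3 + l^6) ≤ l^2 * (l - l^2 - l^3 + l^6) :=
    mul_le_mul_of_nonneg_right hule hcoef.le
  have hb2 : l^2 * (l - l^2 - l^3 + l^6) < l - l^2 - l^3 := by
    nlinarith [sq_nonneg (l - 1/2), sq_nonneg (l - 10/17), mul_pos (sub_pos.2 h2) (sub_pos.2 h1),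
      sq_nonneg (l^2 - l), sq_nonneg (l^3),
      mul_nonneg (mul_nonneg (sub_pos.2 h2).le (sub_pos.2 h1).le) (sub_pos.2 h1).le]
  nlinarith [hb1, hb2]

private lemma summ_aux' (q : ℝ) (hq : 1 < q) (c : ℕ → ℕ) (hc : ∀ n, c n ≤ 1) :
    Summable (fun n => (c n : ℝ)/q^(n+1)) := by
  have hq0 : 0 < q := lt_trans one_pos hq
  have hl0 : (0:ℝ) ≤ 1/q := by positivity
  have hl1 : 1/q < 1 := by rw [div_lt_one hq0]; exact hq
  have hg : Summable (fun n : ℕ => (1/q)^(n+1)) := by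
    have := (summable_geometric_of_lt_one hl0 hl1).mul_right (1/q)
    simpa only [← pow_succ] using this
  apply Summable.of_nonneg_of_le (fun n => by positivity) (fun n => ?_) hg
  rw [one_div_pow]
  gcongr
  exact_mod_cast hc n

private lemma even_sum' (q : ℝ) (M : ℕ) :
    ∑ i ∈ Finset.range (2*M), ((i % 2 : ℕ) : ℝ)/q^(i+1)
      = ∑ j ∈ Finset.range M, (1/q)^(2*(j+1)) := by
  induction M with
  | zero => simp
  | succ M ih =>
    rw [show 2*(M+1) = 2*M + 1 + 1 by ring, Finset.sum_range_succ, Finset.sum_range_succ,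
      ih, Finset.sum_range_succ, show (2*M) % 2 = 0 by omega, show (2*M+1) % 2 = 1 by omega]
    push_cast
    rw [one_div_pow]
    norm_num
    congr 1

private lemma tail_eq' (q : ℝ) (hq : 1 < q) (m : ℕ)
    (a : ℕ → ℕ)
    (hadef : ∀ i, a i =
      if i < 2 * m then i % 2
      else if i = 2 * m then 1
      else if i < 2 * m + 5 then 0
      else (i - (2 * m + 4)) % 2) :
    ∑' k : ℕ, (a (k + (2*m+5)) : ℝ)/q^((k + (2*m+5)) + 1)
      = (1/q)^(2*m+6)/(1 - (1/q)^2) := by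
  have hq0 : 0 < q := lt_trans one_pos hq
  have hl0 : (0:ℝ) ≤ 1/q := by positivity
  have hl1 : 1/q < 1 := by rw [div_lt_one hq0]; exact hq
  have hr0 : (0:ℝ) ≤ (1/q)^2 := by positivity
  have hr1 : (1/q)^2 < 1 := by nlinarith
  set g : ℕ → ℝ := fun k => (a (k + (2*m+5)) : ℝ)/q^((k + (2*m+5)) + 1) with hg
  have he : ∀ j, g (2*j) = (1/q)^(2*m+6) * ((1/q)^2)^j := by
    intro j
    have ha : a (2*j + (2*m+5)) = 1 := by
      rw [hadef]
      rw [if_neg (by omega), if_neg (by omega), if_neg (by omega)]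
      omega
    simp only [hg]
    rw [ha]
    push_cast
    rw [← pow_mul, ← pow_add, one_div_pow]
    congr 2
    omega
  have ho : ∀ j, g (2*j+1) = 0 := by
    intro j
    have ha : a (2*j+1 + (2*m+5)) = 0 := by
      rw [hadef]
      rw [if_neg (by omega), if_neg (by omega), if_neg (by omega)]
      omega
    simp [hg, ha]
  have hse : Summable (fun j => g (2*j)) := by
    rw [show (fun j => g (2*j)) = (fun j => (1/q)^(2*m+6) * ((1/q)^2)^j) from funext he]
    exact (summable_geometric_of_lt_one hr0 hr1).mul_left _
  have hso : Summable (fun j => g (2*j+1)) := by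
    rw [show (fun j => g (2*j+1)) = (fun _ => (0:ℝ)) from funext ho]
    exact summable_zero
  have hkey := tsum_even_add_odd hse hso
  rw [show ∑' k, g k = ∑' k, g (2*k) + ∑' k, g (2*k+1) from hkey.symm]
  rw [show (fun j => g (2*j)) = (fun j => (1/q)^(2*m+6) * ((1/q)^2)^j) from funext he,
    show (fun j => g (2*j+1)) = (fun _ => (0:ℝ)) from funext ho]
  rw [tsum_mul_left, tsum_geometric_of_lt_one hr0 hr1, tsum_zero, add_zero]
  ring

theorem stmt10 (q2 : ℝ) (hq2 : q2 ∈ Set.Ioo (1:ℝ) 2)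
    (hq2eq : q2 ^ 4 = 2 * q2 ^ 2 + q2 + 1)
    (q : ℝ) (hq : q2 < q) (hq' : q < 2)
    (m : ℕ) (hm : 1 ≤ m)
    (a : ℕ → ℕ)
    (hadef : ∀ i, a i =
      if i < 2 * m then i % 2
      else if i = 2 * m then 1
      else if i < 2 * m + 5 then 0
      else (i - (2 * m + 4)) % 2)
    (x : ℝ) (hx : x = ∑' n : ℕ, (a n : ℝ) / q ^ (n + 1)) :
    (∀ c, IsExpansion q x c → c 0 = 0) ∧
      (∑ j ∈ Finset.range m, (1 / q) ^ (2 * (j + 1))) + (1 / q) ^ (2 * m + 1) +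
        (1 / q) ^ (2 * m + 6) / (1 - (1 / q) ^ 2) < 1 / q := by
  
  obtain ⟨hq21, hq22⟩ := hq2
  have hq17q2 : (1.7:ℝ) < q2 := by
    nlinarith [sq_nonneg (q2 - 1.7), sq_nonneg (q2 + 1.7), sq_nonneg (q2*q2 - 2.89)]
  have hq1 : (1:ℝ) < q := lt_trans hq21 hq
  have hq0 : (0:ℝ) < q := lt_trans one_pos hq1
  have hq17 : (1.7:ℝ) < q := lt_trans hq17q2 hq
  have hlh : (1:ℝ)/2 < 1/q := one_div_lt_one_div_of_lt hq0 hq'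
  have hlu : (1:ℝ)/q < 10/17 := by
    rw [div_lt_div_iff₀ hq0 (by norm_num)]
    linarith
  have key := key_ineq' (1/q) hlh hlu m hm
  have ha1 : ∀ i, a i ≤ 1 := by
    intro i; rw [hadef i]; split_ifs <;> omega
  have hfs : Summable (fun n => (a n:ℝ)/q^(n+1)) := summ_aux' q hq1 a ha1
  have hfin : ∑ i ∈ Finset.range (2*m+5), (a i:ℝ)/q^(i+1)
      = (∑ j ∈ Finset.range m, (1/q)^(2*(j+1))) + (1/q)^(2*m+1) := by
    have e0 : ∀ k, 2*m+1 ≤ k → k ≤ 2*m+4 → (a k:ℝ)/q^(k+1) = 0 := by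
      intro k h1 h2
      have hak : a k = 0 := by
        rw [hadef k, if_neg (by omega), if_neg (by omega), if_pos (by omega)]
      simp [hak]
    rw [show 2*m+5 = 2*m+4+1 by ring, Finset.sum_range_succ,
      show 2*m+4 = 2*m+3+1 by ring, Finset.sum_range_succ,
      show 2*m+3 = 2*m+2+1 by ring, Finset.sum_range_succ,
      show 2*m+2 = 2*m+1+1 by ring, Finset.sum_range_succ,
      Finset.sum_range_succ]
    rw [e0 (2*m+1) (by omega) (by omega), e0 (2*m+2) (by omega) (by omega),
      e0 (2*m+3) (by omega) (by omega), e0 (2*m+4) (by omega) (by omega)]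
    have ha2m : a (2*m) = 1 := by
      rw [hadef (2*m), if_neg (by omega), if_pos rfl]
    rw [ha2m]
    have hcong : ∑ i ∈ Finset.range (2*m), (a i:ℝ)/q^(i+1)
        = ∑ i ∈ Finset.range (2*m), ((i % 2 : ℕ) : ℝ)/q^(i+1) := by
      apply Finset.sum_congr rfl
      intro i hi
      rw [hadef i, if_pos (Finset.mem_range.mp hi)]
    rw [hcong, even_sum' q m]
    push_cast
    rw [one_div_pow]
    ring
  have htail := tail_eq' q hq1 m a hadef
  have hsplit := Summable.sum_add_tsum_nat_add (2*m+5) hfs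
  have hxval : x = (∑ j ∈ Finset.range m, (1 / q) ^ (2 * (j + 1))) + (1 / q) ^ (2 * m + 1) +
      (1 / q) ^ (2 * m + 6) / (1 - (1 / q) ^ 2) := by
    rw [hx, ← hsplit, hfin, htail]
  refine ⟨?_, key⟩
  intro c hc
  have h1 := hc.1 0
  by_contra h0
  have hc0 : c 0 = 1 := by omega
  have hle : (1:ℝ)/q ≤ x := by
    have hcs : Summable (fun n => (c n:ℝ)/q^(n+1)) := summ_aux' q hq1 c hc.1
    have := Summable.le_tsum hcs 0 (fun i _ => by positivity)
    rw [hc.2]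
    simpa [hc0] using this
  rw [hxval] at hle
  linarith
end
end
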